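/- arXiv:1104.4425 — 8 statements merged into one kernel-verified Lean document; each statement's English description precedes it below -/
import Mathlib

section
/- For positive integers n and d₁ ≤ d₂, the (d₁,d₂)-complexity of a rainbow word of length n satisfies the upper bound K(n,{d₁,d₁+1,…,d₂}) ≤ n + Σ_{k≥1} C(n−(d₁−1)k, k+1) − Σ_{k≥1} C(n−d₂k, k+1), where C(a,b) denotes the binomial coefficient (taken to be 0 when a < b or a < 0). -/
open Finset

instance chainDecPred {α : Type*} (R : α → α → Prop) [DecidableRel R] :
    DecidablePred (List.Chain' R) :=
  fun l => inferInstanceAs (Decidable (l.IsChain R))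

/-- Strictly increasing lists of length `s`, entries in `[1,m]`, gaps ≥ `d`. -/
def gapLists (m d s : ℕ) : Finset (List ℕ) :=
  (((Finset.Icc 1 m).powersetCard s).image fun t => t.sort (· ≤ ·)).filter
    fun l => l.Chain' fun a b => a + d ≤ b

lemma mem_gapLists {m d s : ℕ} (hd : 1 ≤ d) {l : List ℕ} :
    l ∈ gapLists m d s ↔
      l.length = s ∧ (∀ x ∈ l, x ∈ Finset.Icc 1 m) ∧ l.Chain' fun a b => a + d ≤ b := by
  constructor
  · intro h
    rw [gapLists, Finset.mem_filter, Finset.mem_image] at h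
    obtain ⟨⟨t, ht, rfl⟩, hc⟩ := h
    rw [Finset.mem_powersetCard] at ht
    exact ⟨by rw [Finset.length_sort, ht.2],
      fun x hx => ht.1 ((Finset.mem_sort _).1 hx), hc⟩
  · rintro ⟨hlen, hmem, hc⟩
    rw [gapLists, Finset.mem_filter, Finset.mem_image]
    have hlt : l.Chain' (· < ·) := hc.imp (fun {a b} h => by omega)
    have hsorted : l.Pairwise (· < ·) := List.isChain_iff_pairwise.mp hlt
    have hnd : l.Nodup := hsorted.nodup
    refine ⟨⟨l.toFinset, ?_, ?_⟩, hc⟩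
    · rw [Finset.mem_powersetCard]
      exact ⟨fun x hx => hmem x (List.mem_toFinset.mp hx),
        by rw [List.toFinset_card_of_nodup hnd, hlen]⟩
    · exact (List.toFinset_sort _ hnd).mpr (hsorted.imp le_of_lt)

lemma card_gapLists_one (m s : ℕ) : (gapLists m 1 s).card = m.choose s := by
  have himg : ∀ l ∈ ((Finset.Icc 1 m).powersetCard s).image fun t => t.sort (· ≤ ·),
      l.Chain' fun a b => a + 1 ≤ b := by
    intro l hl
    rw [Finset.mem_image] at hl
    obtain ⟨t, -, rfl⟩ := hl
    exact ((Finset.sortedLT_sort t).isChain).imp (fun {a b} h => by omega)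
  have hinj : Function.Injective fun t : Finset ℕ => t.sort (· ≤ ·) := by
    intro t₁ t₂ h
    have := congrArg List.toFinset h
    simpa [Finset.sort_toFinset] using this
  rw [gapLists, Finset.filter_true_of_mem himg, Finset.card_image_of_injective _ hinj,
    Finset.card_powersetCard, Nat.card_Icc]
  simp

lemma chain'_ge {d : ℕ} {l : List ℕ} (h : l.Chain' fun a b => a + d ≤ b) :
    ∀ j (hj : j < l.length) i (hij : i ≤ j), l[i]'(by omega) + d * (j - i) ≤ l[j]'hj := by
  intro j
  induction j with
  | zero =>
    intro hj i hij
    interval_cases i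
    simp
  | succ j ih =>
    intro hj i hij
    rcases Nat.eq_or_lt_of_le hij with rfl | hlt
    · simp
    · have h1 := ih (by omega) i (by omega)
      have h2 := List.isChain_iff_getElem.mp h j (by omega)
      have e : j + 1 - i = (j - i) + 1 := by omega
      rw [e, Nat.mul_succ]
      omega

lemma gapLists_bounds {m d s : ℕ} (hd : 1 ≤ d) {l : List ℕ}
    (hl : l ∈ gapLists m d s) (i : ℕ) (hi : i < l.length) :
    1 + d * i ≤ l[i] ∧ l[i] + d * (l.length - 1 - i) ≤ m := by
  obtain ⟨hlen, hmem, hc⟩ := (mem_gapLists hd).1 hl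
  have h0 : (1:ℕ) ≤ l[0]'(by omega) ∧ l[0]'(by omega) ≤ m := by
    have := hmem (l[0]'(by omega)) (l.getElem_mem (by omega))
    rw [Finset.mem_Icc] at this
    exact this
  have hlast : (1:ℕ) ≤ l[l.length - 1]'(by omega) ∧ l[l.length - 1]'(by omega) ≤ m := by
    have := hmem (l[l.length - 1]'(by omega)) (l.getElem_mem (by omega))
    rw [Finset.mem_Icc] at this
    exact this
  constructor
  · have := chain'_ge hc i hi 0 (by omega)
    simp only [Nat.sub_zero] at this
    omega
  · have := chain'_ge hc (l.length - 1) (by omega) i (by omega)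
    omega

lemma card_gapLists (m d s : ℕ) (hd : 1 ≤ d) :
    (gapLists m d s).card = (m - (d - 1) * (s - 1)).choose s := by
  set c := d - 1 with hc
  set m' := m - c * (s - 1) with hm'
  rw [← card_gapLists_one m' s]
  refine Finset.card_bij' (fun l _ => l.mapIdx fun j x => x - c * j)
    (fun l _ => l.mapIdx fun j x => x + c * j) ?_ ?_ ?_ ?_
  · -- down maps into gapLists m' 1 s
    intro l hl
    obtain ⟨hlen, hmem, hchain⟩ := (mem_gapLists hd).1 hl
    subst hlen
    rw [mem_gapLists le_rfl]
    refine ⟨by simp, ?_, ?_⟩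
    · intro x hx
      rw [List.mem_iff_getElem] at hx
      obtain ⟨i, hilt, rfl⟩ := hx
      have hil : i < l.length := by simpa using hilt
      rw [List.getElem_mapIdx]
      obtain ⟨hlow, hhigh⟩ := gapLists_bounds hd hl i hil
      have e1 : c * (l.length - 1) = c * i + c * (l.length - 1 - i) := by
        rw [← Nat.mul_add]; congr 1; omega
      have e2 : c * i ≤ d * i := Nat.mul_le_mul_right i (by omega)
      have e3 : c * (l.length - 1 - i) ≤ d * (l.length - 1 - i) :=
        Nat.mul_le_mul_right _ (by omega)
      rw [Finset.mem_Icc]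
      omega
    · refine List.isChain_iff_getElem.mpr ?_
      intro i hilt
      simp only [List.length_mapIdx] at hilt
      simp only [List.get_eq_getElem, List.getElem_mapIdx]
      have h1 := List.isChain_iff_getElem.mp hchain i (by omega)
      obtain ⟨hlow, -⟩ := gapLists_bounds hd hl i (by omega)
      have e1 : c * (i + 1) = c * i + c := by ring
      have e2 : c * i ≤ d * i := Nat.mul_le_mul_right i (by omega)
      omega
  · -- up maps into gapLists m d s
    intro l hl
    obtain ⟨hlen, hmem, hchain⟩ := (mem_gapLists le_rfl).1 hl
    rw [mem_gapLists hd]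
    refine ⟨by simpa using hlen, ?_, ?_⟩
    · intro x hx
      rw [List.mem_iff_getElem] at hx
      obtain ⟨i, hilt, rfl⟩ := hx
      have hil : i < l.length := by simpa using hilt
      rw [List.getElem_mapIdx]
      have hib := hmem (l[i]'hil) (l.getElem_mem hil)
      rw [Finset.mem_Icc] at hib
      have e2 : c * i ≤ c * (s - 1) := Nat.mul_le_mul_left c (by omega)
      rw [Finset.mem_Icc]
      omega
    · refine List.isChain_iff_getElem.mpr ?_
      intro i hilt
      simp only [List.length_mapIdx] at hilt
      simp only [List.get_eq_getElem, List.getElem_mapIdx]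
      have h1 := List.isChain_iff_getElem.mp hchain i (by omega)
      have e1 : c * (i + 1) = c * i + c := by ring
      omega
  · -- up (down l) = l
    intro l hl
    apply List.ext_getElem (by simp)
    intro i h1 h2
    simp only [List.getElem_mapIdx]
    obtain ⟨hlow, -⟩ := gapLists_bounds hd hl i (by simpa using h2)
    have e2 : c * i ≤ d * i := Nat.mul_le_mul_right i (by omega)
    omega
  · -- down (up l) = l
    intro l hl
    apply List.ext_getElem (by simp)
    intro i h1 h2
    simp only [List.getElem_mapIdx]
    omega

/-- An `M`-subword of a rainbow word of length `n` is determined by a nonempty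
strictly increasing sequence of positions `1 ≤ i₁ < i₂ < ⋯ < i_s ≤ n` such that
each consecutive gap `i_{j+1} - i_j` belongs to `M`. -/
def IsMSubword (n : ℕ) (M : Set ℕ) (l : List ℕ) : Prop :=
  l ≠ [] ∧ (∀ x ∈ l, 1 ≤ x ∧ x ≤ n) ∧ l.Chain' (fun a b => a < b ∧ b - a ∈ M)

/-- The `M`-complexity `K(n, M)`: the number of `M`-subwords of a rainbow word
of length `n`. -/
noncomputable def MComplexity (n : ℕ) (M : Set ℕ) : ℕ :=
  Nat.card { l : List ℕ // IsMSubword n M l }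

/-- For positive integers `n` and `d₁ ≤ d₂`,
`K(n, {d₁,…,d₂}) ≤ n + Σ_{k≥1} C(n-(d₁-1)k, k+1) - Σ_{k≥1} C(n-d₂k, k+1)`. -/
theorem scattered_complexity_upper_bound (n d₁ d₂ : ℕ) (hn : 0 < n) (hd₁ : 0 < d₁)
    (hd : d₁ ≤ d₂) :
    MComplexity n (Set.Icc d₁ d₂) ≤
      n + (∑ᶠ k ∈ Set.Ici 1, Nat.choose (n - (d₁ - 1) * k) (k + 1))
        - ∑ᶠ k ∈ Set.Ici 1, Nat.choose (n - d₂ * k) (k + 1) := by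
  classical
  set good : ℕ → Finset (List ℕ) := fun s =>
    (gapLists n d₁ s).filter fun l => l.Chain' fun a b => b - a ≤ d₂ with hgood
  set bigF : Finset (List ℕ) := (Finset.Icc 1 n).biUnion good with hbigF
  -- step 1: the subwords are exactly the elements of `bigF`
  have hiff : ∀ l : List ℕ, IsMSubword n (Set.Icc d₁ d₂) l ↔ l ∈ bigF := by
    intro l
    constructor
    · rintro ⟨hne, hmem, hch⟩
      have hch1 : l.Chain' fun a b => a + d₁ ≤ b := hch.imp fun {a b} h => by
        obtain ⟨h1, h2⟩ := h; rw [Set.mem_Icc] at h2; omega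
      have hch2 : l.Chain' fun a b => b - a ≤ d₂ := hch.imp fun {a b} h => by
        obtain ⟨h1, h2⟩ := h; rw [Set.mem_Icc] at h2; omega
      have hlt : l.Chain' (· < ·) := hch.imp fun {a b} h => h.1
      have hnd : l.Nodup := (List.isChain_iff_pairwise.mp hlt).nodup
      have hsub : l.toFinset ⊆ Finset.Icc 1 n := by
        intro x hx
        rw [Finset.mem_Icc]
        exact hmem x (List.mem_toFinset.mp hx)
      have hlen : l.length ≤ n := by
        have := Finset.card_le_card hsub
        rw [List.toFinset_card_of_nodup hnd, Nat.card_Icc] at this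
        omega
      rw [hbigF, Finset.mem_biUnion]
      refine ⟨l.length, ?_, ?_⟩
      · rw [Finset.mem_Icc]
        have : 0 < l.length := List.length_pos_iff.mpr hne
        omega
      · rw [hgood, Finset.mem_filter, mem_gapLists hd₁]
        exact ⟨⟨rfl, fun x hx => Finset.mem_Icc.mpr (hmem x hx), hch1⟩, hch2⟩
    · intro h
      rw [hbigF, Finset.mem_biUnion] at h
      obtain ⟨s, hs, hl⟩ := h
      rw [Finset.mem_Icc] at hs
      rw [hgood, Finset.mem_filter, mem_gapLists hd₁] at hl
      obtain ⟨⟨hlen, hmem, hch1⟩, hch2⟩ := hl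
      refine ⟨?_, ?_, ?_⟩
      · intro he
        rw [he] at hlen
        simp at hlen
        omega
      · intro x hx
        have := hmem x hx
        rw [Finset.mem_Icc] at this
        exact this
      · have hch1 := List.isChain_iff_getElem.mp hch1
        have hch2 := List.isChain_iff_getElem.mp hch2
        refine List.isChain_iff_getElem.mpr ?_
        intro i hi
        have h1 := hch1 i hi
        have h2 := hch2 i hi
        refine ⟨by omega, ?_⟩
        rw [Set.mem_Icc]
        omega
  have hcard : MComplexity n (Set.Icc d₁ d₂) = bigF.card := by
    rw [MComplexity, ← Nat.card_eq_finsetCard]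
    exact Nat.card_congr (Equiv.subtypeEquivRight hiff)
  have hb1 : bigF.card ≤ ∑ s ∈ Finset.Icc 1 n, (good s).card := Finset.card_biUnion_le
  -- s = 1 term
  have hg1 : (good 1).card ≤ n := by
    calc (good 1).card ≤ (gapLists n d₁ 1).card :=
          Finset.card_le_card (Finset.filter_subset _ _)
      _ = n := by rw [card_gapLists n d₁ 1 hd₁]; simp
  -- s ≥ 2 terms
  have hgs : ∀ s, 2 ≤ s → (good s).card ≤
      (n - (d₁ - 1) * (s - 1)).choose s - (n - d₂ * (s - 1)).choose s := by
    intro s hs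
    have hsub2 : gapLists n (d₂ + 1) s ⊆ gapLists n d₁ s := by
      intro l hl
      rw [mem_gapLists (by omega)] at hl
      rw [mem_gapLists hd₁]
      exact ⟨hl.1, hl.2.1, hl.2.2.imp fun {a b} h => by omega⟩
    have hsdiff : good s ⊆ gapLists n d₁ s \ gapLists n (d₂ + 1) s := by
      rw [Finset.subset_sdiff]
      refine ⟨Finset.filter_subset _ _, ?_⟩
      rw [Finset.disjoint_left]
      intro l hl hl2
      rw [hgood, Finset.mem_filter] at hl
      rw [mem_gapLists (by omega)] at hl2
      obtain ⟨-, hch2⟩ := hl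
      obtain ⟨hlen, -, hch3⟩ := hl2
      have h2 := List.isChain_iff_getElem.mp hch2 0 (by omega)
      have h3 := List.isChain_iff_getElem.mp hch3 0 (by omega)
      omega
    calc (good s).card ≤ (gapLists n d₁ s \ gapLists n (d₂ + 1) s).card :=
        Finset.card_le_card hsdiff
      _ = (gapLists n d₁ s).card - (gapLists n (d₂ + 1) s).card := Finset.card_sdiff_of_subset hsub2
      _ = (n - (d₁ - 1) * (s - 1)).choose s - (n - d₂ * (s - 1)).choose s := by
        rw [card_gapLists _ _ _ hd₁, card_gapLists _ _ _ (by omega)]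
        simp
  -- split off the s = 1 term
  have hsplit : ∑ s ∈ Finset.Icc 1 n, (good s).card
      = (good 1).card + ∑ s ∈ Finset.Icc 2 n, (good s).card := by
    rw [← Finset.add_sum_erase _ _ (Finset.mem_Icc.mpr ⟨le_refl 1, hn⟩)]
    congr 1
    apply Finset.sum_congr _ (fun _ _ => rfl)
    rw [Finset.Icc_erase_left]
    exact (Finset.Icc_add_one_left_eq_Ioc 1 n).symm
  -- reindex s = k + 1
  have hIcc : (Finset.Icc 1 (n - 1)).map (addRightEmbedding 1) = Finset.Icc 2 n := by
    rw [Finset.map_add_right_Icc]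
    congr 1
    omega
  have hreidx : ∑ s ∈ Finset.Icc 2 n,
        ((n - (d₁ - 1) * (s - 1)).choose s - (n - d₂ * (s - 1)).choose s)
      = ∑ k ∈ Finset.Icc 1 (n - 1),
        ((n - (d₁ - 1) * k).choose (k + 1) - (n - d₂ * k).choose (k + 1)) := by
    rw [← hIcc, Finset.sum_map]
    apply Finset.sum_congr rfl
    intro k hk
    simp [addRightEmbedding_apply]
  have hglef : ∀ k ∈ Finset.Icc 1 (n - 1),
      (n - d₂ * k).choose (k + 1) ≤ (n - (d₁ - 1) * k).choose (k + 1) := by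
    intro k _
    have h1 : (d₁ - 1) * k ≤ d₂ * k := Nat.mul_le_mul_right k (by omega)
    exact Nat.choose_le_choose _ (by omega)
  have hsum_sub : ∑ k ∈ Finset.Icc 1 (n - 1),
        ((n - (d₁ - 1) * k).choose (k + 1) - (n - d₂ * k).choose (k + 1))
      = ∑ k ∈ Finset.Icc 1 (n - 1), (n - (d₁ - 1) * k).choose (k + 1)
        - ∑ k ∈ Finset.Icc 1 (n - 1), (n - d₂ * k).choose (k + 1) :=
    Finset.sum_tsub_distrib _ hglef
  -- finsum = finite sum
  have hfin1 : ∑ᶠ k ∈ Set.Ici 1, (n - (d₁ - 1) * k).choose (k + 1)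
      = ∑ k ∈ Finset.Icc 1 (n - 1), (n - (d₁ - 1) * k).choose (k + 1) := by
    apply finsum_mem_eq_sum_of_inter_support_eq
    ext k
    simp only [Set.mem_inter_iff, Set.mem_Ici, Function.mem_support, Finset.coe_Icc,
      Set.mem_Icc]
    constructor
    · rintro ⟨h1, h2⟩
      refine ⟨⟨h1, ?_⟩, h2⟩
      by_contra hk
      exact h2 (Nat.choose_eq_zero_of_lt (by omega))
    · rintro ⟨⟨h1, -⟩, h2⟩
      exact ⟨h1, h2⟩
  have hfin2 : ∑ᶠ k ∈ Set.Ici 1, (n - d₂ * k).choose (k + 1)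
      = ∑ k ∈ Finset.Icc 1 (n - 1), (n - d₂ * k).choose (k + 1) := by
    apply finsum_mem_eq_sum_of_inter_support_eq
    ext k
    simp only [Set.mem_inter_iff, Set.mem_Ici, Function.mem_support, Finset.coe_Icc,
      Set.mem_Icc]
    constructor
    · rintro ⟨h1, h2⟩
      refine ⟨⟨h1, ?_⟩, h2⟩
      by_contra hk
      exact h2 (Nat.choose_eq_zero_of_lt (by omega))
    · rintro ⟨⟨h1, -⟩, h2⟩
      exact ⟨h1, h2⟩
  have hGF : ∑ k ∈ Finset.Icc 1 (n - 1), (n - d₂ * k).choose (k + 1)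
      ≤ ∑ k ∈ Finset.Icc 1 (n - 1), (n - (d₁ - 1) * k).choose (k + 1) :=
    Finset.sum_le_sum hglef
  rw [hcard, hfin1, hfin2, Nat.add_sub_assoc hGF, ← hsum_sub]
  calc bigF.card ≤ ∑ s ∈ Finset.Icc 1 n, (good s).card := hb1
    _ = (good 1).card + ∑ s ∈ Finset.Icc 2 n, (good s).card := hsplit
    _ ≤ n + ∑ s ∈ Finset.Icc 2 n,
        ((n - (d₁ - 1) * (s - 1)).choose s - (n - d₂ * (s - 1)).choose s) := by
        apply Nat.add_le_add hg1
        apply Finset.sum_le_sum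
        intro s hs
        exact hgs s (Finset.mem_Icc.mp hs).1
    _ = n + ∑ k ∈ Finset.Icc 1 (n - 1),
        ((n - (d₁ - 1) * k).choose (k + 1) - (n - d₂ * k).choose (k + 1)) := by
        rw [hreidx]
end

section
/- For positive integers n and d, writing n = h·d + m with 0 ≤ m < d (i.e., h = ⌊n/d⌋ and m = n mod d), the {d}-complexity of a rainbow word of length n is K(n,{d}) = (h+1)(n+m)/2. -/
lemma chain_ap (d : ℕ) : ∀ (t : List ℕ) (a : ℕ),
    (a :: t).Chain' (fun x y => x < y ∧ y - x ∈ ({d} : Set ℕ)) →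
    a :: t = (List.range (t.length + 1)).map (fun j => a + j * d) := by
  intro t
  induction t with
  | nil => intro a _; rw [List.range_succ]; simp
  | cons b t ih =>
    intro a hch
    unfold List.Chain' at hch; rw [List.isChain_cons_cons] at hch
    obtain ⟨⟨hab, hdiff⟩, hch'⟩ := hch
    simp only [Set.mem_singleton_iff] at hdiff
    have hb : b = a + d := by omega
    have hIH := ih b hch'
    simp only [List.length_cons]
    rw [List.range_succ_eq_map, List.map_cons, List.map_map]
    have : ((fun j => a + j * d) ∘ Nat.succ) = fun j => b + j * d := by
      funext j; simp [hb, Nat.succ_mul]; ring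
    rw [this, ← hIH]
    simp

lemma isMSubword_singleton_iff (n d : ℕ) (hd : 0 < d) (l : List ℕ) :
    IsMSubword n {d} l ↔ ∃ a k, 1 ≤ a ∧ a + k * d ≤ n ∧
      l = (List.range (k + 1)).map (fun j => a + j * d) := by
  constructor
  · rintro ⟨hne, hbd, hch⟩
    obtain ⟨a, t, rfl⟩ := List.exists_cons_of_ne_nil hne
    refine ⟨a, t.length, ?_, ?_, chain_ap d t a hch⟩
    · exact (hbd a (by simp)).1
    · have hmem : a + t.length * d ∈ a :: t := by
        rw [chain_ap d t a hch]
        exact List.mem_map.2 ⟨t.length, by simp, rfl⟩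
      exact (hbd _ hmem).2
  · rintro ⟨a, k, ha, hk, rfl⟩
    refine ⟨by simp, ?_, ?_⟩
    · intro x hx
      obtain ⟨j, hj, rfl⟩ := List.mem_map.1 hx
      simp only [List.mem_range] at hj
      have : j * d ≤ k * d := Nat.mul_le_mul_right d (by omega)
      omega
    · unfold List.Chain'; rw [List.isChain_map]
      rw [List.isChain_range_succ]
      intro i hi
      refine ⟨?_, ?_⟩ <;> simp only [Nat.succ_mul, Set.mem_singleton_iff] <;> omega

/-- For positive `n`, `d` with `n = h·d + m`, `0 ≤ m < d`, the `{d}`-complexity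
of a rainbow word of length `n` is `K(n,{d}) = (h+1)(n+m)/2`. -/
theorem singleton_complexity (n d h m : ℕ) (hn : 0 < n) (hd : 0 < d)
    (hnm : n = h * d + m) (hm : m < d) :
    MComplexity n {d} = (h + 1) * (n + m) / 2 := by
  classical
  set g : ℕ × ℕ → List ℕ := fun p => (List.range (p.2 + 1)).map (fun j => p.1 + j * d) with hg
  set S : Finset (ℕ × ℕ) :=
    (Finset.range (h + 1)).biUnion
      (fun k => (Finset.Icc 1 (n - k * d)).image (fun a => (a, k))) with hS
  have hmemS : ∀ p : ℕ × ℕ, p ∈ S ↔ 1 ≤ p.1 ∧ p.1 + p.2 * d ≤ n := by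
    rintro ⟨a, k⟩
    simp only [hS, Finset.mem_biUnion, Finset.mem_range, Finset.mem_image, Finset.mem_Icc,
      Prod.mk.injEq]
    constructor
    · rintro ⟨k', hk', a', ⟨ha1, ha2⟩, rfl, rfl⟩
      have hkd : k' * d ≤ h * d := Nat.mul_le_mul_right d (by omega)
      omega
    · rintro ⟨ha, hak⟩
      refine ⟨k, ?_, a, ⟨ha, by omega⟩, rfl, rfl⟩
      by_contra hk
      have h1 : (h + 1) * d ≤ k * d := Nat.mul_le_mul_right d (by omega)
      have h2 : (h + 1) * d = h * d + d := by ring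
      omega
  have hginj : Function.Injective g := by
    intro p q hpq
    have hlen := congrArg List.length hpq
    simp only [hg, List.length_map, List.length_range] at hlen
    have h2 : p.2 = q.2 := by omega
    have hhead := congrArg List.head? hpq
    simp only [hg, List.range_succ_eq_map, List.map_cons, List.head?_cons] at hhead
    have h1 : p.1 = q.1 := by simpa using hhead
    exact Prod.ext h1 h2
  have hset : {l : List ℕ | IsMSubword n {d} l} = ↑(S.image g) := by
    ext l
    simp only [Set.mem_setOf_eq, Finset.coe_image, Set.mem_image, Finset.mem_coe]
    rw [isMSubword_singleton_iff n d hd l]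
    constructor
    · rintro ⟨a, k, ha, hak, rfl⟩
      exact ⟨(a, k), (hmemS (a, k)).2 ⟨ha, hak⟩, rfl⟩
    · rintro ⟨p, hp, rfl⟩
      obtain ⟨h1, h2⟩ := (hmemS p).1 hp
      exact ⟨p.1, p.2, h1, h2, rfl⟩
  have hcard : MComplexity n {d} = S.card := by
    have : MComplexity n {d} = Set.ncard {l : List ℕ | IsMSubword n {d} l} := rfl
    rw [this, hset, Set.ncard_coe_finset, Finset.card_image_of_injective _ hginj]
  have hcardS : S.card = ∑ k ∈ Finset.range (h + 1), (n - k * d) := by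
    rw [hS, Finset.card_biUnion]
    · refine Finset.sum_congr rfl fun k _ => ?_
      rw [Finset.card_image_of_injective _ (fun a b hab => by simpa using hab)]
      simp [Nat.card_Icc]
    · intro k _ k' _ hkk'
      rw [Function.onFun_apply, Finset.disjoint_left]
      rintro p hp hp'
      simp only [Finset.mem_image] at hp hp'
      obtain ⟨a, -, rfl⟩ := hp
      obtain ⟨a', -, heq⟩ := hp'
      exact hkk' (by simpa using (congrArg Prod.snd heq).symm)
  have hterm : ∀ k ∈ Finset.range (h + 1), n - k * d = m + (h - k) * d := by
    intro k hk
    simp only [Finset.mem_range] at hk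
    have : k * d + (h - k) * d = h * d := by
      rw [← Nat.add_mul]; congr 1; omega
    omega
  have hrefl : ∑ k ∈ Finset.range (h + 1), (m + (h - k) * d)
      = ∑ k ∈ Finset.range (h + 1), (m + k * d) := by
    have := Finset.sum_range_reflect (fun k => m + k * d) (h + 1)
    simpa using this
  have hsum : ∑ k ∈ Finset.range (h + 1), (m + k * d)
      = (h + 1) * m + (∑ k ∈ Finset.range (h + 1), k) * d := by
    rw [Finset.sum_add_distrib, Finset.sum_const, Finset.card_range, smul_eq_mul,
      ← Finset.sum_mul]
  set T := ∑ k ∈ Finset.range (h + 1), k with hT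
  have hgauss : T * 2 = (h + 1) * h := Finset.sum_range_id_mul_two (h + 1)
  have h2 : (h + 1) * (n + m) = 2 * ((h + 1) * m + T * d) := by
    have hx : (h + 1) * (n + m) = (h + 1) * h * d + 2 * ((h + 1) * m) := by
      rw [hnm]; ring
    rw [hx, ← hgauss]; ring
  rw [hcard, hcardS, Finset.sum_congr rfl hterm, hrefl, hsum, h2]
  omega
end

section
/- For positive integers n and d with d ≤ n, the super-d-complexity of a rainbow word of length n satisfies K(n, {d, d+1, …, n−1}) = Σ_{k≥0} C(n−(d−1)k, k+1), where C(a,b) denotes the binomial coefficient (taken to be 0 when a < b or a < 0). -/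
namespace SuperD

/-- Add `c` to the first entry, `c + e` to the second, `c + 2e` to the third, … -/
def shift (e : ℕ) : ℕ → List ℕ → List ℕ
  | _, [] => []
  | c, x :: xs => (x + c) :: shift e (c + e) xs

/-- Subtract `c` from the first entry, `c + e` from the second, … -/
def unshift (e : ℕ) : ℕ → List ℕ → List ℕ
  | _, [] => []
  | c, x :: xs => (x - c) :: unshift e (c + e) xs

@[simp] lemma shift_nil (e c : ℕ) : shift e c [] = [] := rfl
@[simp] lemma shift_cons (e c x : ℕ) (xs : List ℕ) :
    shift e c (x :: xs) = (x + c) :: shift e (c + e) xs := rfl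
@[simp] lemma unshift_nil (e c : ℕ) : unshift e c [] = [] := rfl
@[simp] lemma unshift_cons (e c x : ℕ) (xs : List ℕ) :
    unshift e c (x :: xs) = (x - c) :: unshift e (c + e) xs := rfl

lemma length_shift (e : ℕ) : ∀ (c : ℕ) (l : List ℕ), (shift e c l).length = l.length
  | _, [] => rfl
  | c, x :: xs => by simp [length_shift e (c + e) xs]

lemma length_unshift (e : ℕ) : ∀ (c : ℕ) (l : List ℕ), (unshift e c l).length = l.length
  | _, [] => rfl
  | c, x :: xs => by simp [length_unshift e (c + e) xs]

lemma chain'_pairwise {s : ℕ} {l : List ℕ} (h : l.Chain' (fun a b => a + s ≤ b)) :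
    l.Pairwise (fun a b => a + s ≤ b) := by
  have t : IsTrans ℕ (fun a b => a + s ≤ b) := ⟨fun a b c hab hbc => by omega⟩
  haveI : Trans (fun a b : ℕ => a + s ≤ b) (fun a b => a + s ≤ b) (fun a b => a + s ≤ b) :=
    ⟨fun hab hbc => by omega⟩
  exact List.isChain_iff_pairwise.mp h

lemma unshift_shift (e : ℕ) : ∀ (c : ℕ) (l : List ℕ), unshift e c (shift e c l) = l
  | _, [] => rfl
  | c, x :: xs => by simp [unshift_shift e (c + e) xs]

lemma shift_unshift (e : ℕ) : ∀ (c : ℕ) (l : List ℕ),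
    l.Chain' (fun a b => a + (e + 1) ≤ b) → (∀ x ∈ l, c ≤ x) →
    shift e c (unshift e c l) = l
  | _, [], _, _ => rfl
  | c, x :: xs, hc, hm => by
    have hp := chain'_pairwise hc
    rw [List.pairwise_cons] at hp
    have h1 : x - c + c = x := Nat.sub_add_cancel (hm x (by simp))
    simp only [unshift_cons, shift_cons, h1]
    rw [shift_unshift e (c + e) xs hc.tail (fun y hy => by have := hp.1 y hy; omega)]

lemma mem_shift_ge (e : ℕ) : ∀ (c : ℕ) (l : List ℕ), (∀ x ∈ l, 1 ≤ x) →
    ∀ y ∈ shift e c l, 1 ≤ y := by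
  intro c l
  induction l generalizing c with
  | nil => simp
  | cons x xs ih =>
    intro hm y hy
    rw [shift_cons, List.mem_cons] at hy
    rcases hy with rfl | hy
    · have := hm x (by simp); omega
    · exact ih (c + e) (fun a ha => hm a (List.mem_cons_of_mem _ ha)) y hy

lemma mem_shift_le (e m : ℕ) : ∀ (l : List ℕ) (c t : ℕ), (∀ x ∈ l, x ≤ m) →
    l.length ≤ t + 1 → ∀ y ∈ shift e c l, y ≤ m + c + e * t := by
  intro l
  induction l with
  | nil => simp
  | cons x xs ih =>
    intro c t hm hlen y hy
    rw [shift_cons, List.mem_cons] at hy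
    rcases hy with rfl | hy
    · have h1 : x ≤ m := hm x (by simp)
      have : x + c ≤ m + c := by omega
      exact le_trans this (Nat.le_add_right _ _)
    · cases xs with
      | nil => simp at hy
      | cons z zs =>
        obtain ⟨t', rfl⟩ : ∃ t', t = t' + 1 := ⟨t - 1, by simp at hlen; omega⟩
        have h2 := ih (c + e) t' (fun a ha => hm a (List.mem_cons_of_mem _ ha))
          (by simp at hlen ⊢; omega) y hy
        rw [Nat.mul_succ]
        generalize e * t' = A at h2 ⊢
        omega

lemma chain'_shift (e : ℕ) : ∀ (c : ℕ) (l : List ℕ), l.Chain' (· < ·) →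
    (shift e c l).Chain' (fun a b => a + (e + 1) ≤ b) := by
  intro c l
  induction l generalizing c with
  | nil => simp [List.Chain']
  | cons x xs ih =>
    intro h
    rw [shift_cons, List.Chain', List.isChain_cons]
    refine ⟨?_, ih (c + e) h.tail⟩
    intro b hb
    cases xs with
    | nil => simp at hb
    | cons y ys =>
      simp only [shift_cons, List.head?_cons, Option.mem_def, Option.some.injEq] at hb
      subst hb
      have : x < y := (List.isChain_cons_cons.mp h).1
      omega

lemma head_add_le (s n : ℕ) : ∀ (xs : List ℕ) (x : ℕ),
    (x :: xs).Chain' (fun a b => a + s ≤ b) → (∀ z ∈ x :: xs, z ≤ n) →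
    x + s * xs.length ≤ n := by
  intro xs
  induction xs with
  | nil => intro x _ h; simpa using h x (by simp)
  | cons y t ih =>
    intro x hc hm
    have h1 : x + s ≤ y := (List.isChain_cons_cons.mp hc).1
    have h2 := ih y (List.isChain_cons_cons.mp hc).2 (fun z hz => hm z (List.mem_cons_of_mem _ hz))
    rw [List.length_cons, Nat.mul_succ]
    generalize s * t.length = A at h2 ⊢
    omega

lemma chain'_unshift (e : ℕ) : ∀ (l : List ℕ) (c : ℕ),
    l.Chain' (fun a b => a + (e + 1) ≤ b) → (∀ x ∈ l, c ≤ x) →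
    (unshift e c l).Chain' (· < ·) := by
  intro l
  induction l with
  | nil => simp [List.Chain']
  | cons x xs ih =>
    intro c hc hm
    have hp := chain'_pairwise hc
    rw [List.pairwise_cons] at hp
    have hx : c ≤ x := hm x (by simp)
    rw [unshift_cons, List.Chain', List.isChain_cons]
    refine ⟨?_, ih (c + e) hc.tail (fun y hy => by have := hp.1 y hy; omega)⟩
    intro b hb
    cases xs with
    | nil => simp at hb
    | cons y ys =>
      simp only [unshift_cons, List.head?_cons, Option.mem_def, Option.some.injEq] at hb
      subst hb
      have h1 : x + (e + 1) ≤ y := hp.1 y (by simp)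
      omega

lemma mem_unshift_ge (e : ℕ) : ∀ (l : List ℕ) (c : ℕ),
    l.Chain' (fun a b => a + (e + 1) ≤ b) → (∀ x ∈ l, c + 1 ≤ x) →
    ∀ y ∈ unshift e c l, 1 ≤ y := by
  intro l
  induction l with
  | nil => simp
  | cons x xs ih =>
    intro c hc hm y hy
    have hp := chain'_pairwise hc
    rw [List.pairwise_cons] at hp
    rw [unshift_cons, List.mem_cons] at hy
    rcases hy with rfl | hy
    · have := hm x (by simp); omega
    · exact ih (c + e) hc.tail
        (fun a ha => by have := hp.1 a ha; have := hm x (by simp); omega) y hy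

lemma mem_unshift_le (e n : ℕ) : ∀ (l : List ℕ) (c : ℕ),
    l.Chain' (fun a b => a + (e + 1) ≤ b) → (∀ x ∈ l, x ≤ n) →
    ∀ y ∈ unshift e c l, y ≤ n - e * (l.length - 1) - c := by
  intro l
  induction l with
  | nil => simp
  | cons x xs ih =>
    intro c hc hm y hy
    rw [unshift_cons, List.mem_cons] at hy
    rcases hy with rfl | hy
    · have h1 : x + (e + 1) * xs.length ≤ n := head_add_le (e + 1) n xs x hc hm
      rw [List.length_cons, Nat.succ_sub_one]
      rw [Nat.succ_mul] at h1
      generalize e * xs.length = A at h1 ⊢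
      omega
    · cases xs with
      | nil => simp at hy
      | cons z zs =>
        have h2 := ih (c + e) hc.tail (fun a ha => hm a (List.mem_cons_of_mem _ ha)) y hy
        simp only [List.length_cons, Nat.succ_sub_one] at h2 ⊢
        rw [Nat.mul_succ]
        generalize e * zs.length = A at h2 ⊢
        omega

lemma chain'_mono_mem {R S : ℕ → ℕ → Prop} : ∀ (l : List ℕ),
    (∀ a ∈ l, ∀ b ∈ l, R a b → S a b) → l.Chain' R → l.Chain' S := by
  intro l
  induction l with
  | nil => intro _ _; simp [List.Chain']
  | cons x xs ih =>
    intro h hc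
    cases xs with
    | nil => simp [List.Chain']
    | cons y t =>
      rw [List.Chain', List.isChain_cons_cons] at hc ⊢
      exact ⟨h x (by simp) y (by simp) hc.1,
        ih (fun a ha b hb => h a (List.mem_cons_of_mem _ ha) b (List.mem_cons_of_mem _ hb)) hc.2⟩

/-- `Good n d l` : `l` is a nonempty list in `[1,n]` with consecutive gaps at least `d`. -/
def Good (n d : ℕ) (l : List ℕ) : Prop :=
  l ≠ [] ∧ (∀ x ∈ l, 1 ≤ x ∧ x ≤ n) ∧ l.Chain' (fun a b => a + d ≤ b)

lemma isMSubword_iff (n d : ℕ) (hd : 0 < d) (l : List ℕ) :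
    IsMSubword n (Set.Icc d (n - 1)) l ↔ Good n d l := by
  unfold IsMSubword Good
  constructor
  · rintro ⟨h1, h2, h3⟩
    refine ⟨h1, h2, ?_⟩
    refine chain'_mono_mem l (fun a _ b _ hab => ?_) h3
    obtain ⟨hlt, hmem⟩ := hab
    rw [Set.mem_Icc] at hmem
    omega
  · rintro ⟨h1, h2, h3⟩
    refine ⟨h1, h2, ?_⟩
    refine chain'_mono_mem l (fun a ha b hb hab => ?_) h3
    have ha' := h2 a ha
    have hb' := h2 b hb
    refine ⟨by omega, ?_⟩
    rw [Set.mem_Icc]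
    omega

lemma good_length_lt (n e : ℕ) (hn : 0 < n) {l : List ℕ} (h : Good n (e + 1) l) :
    l.length - 1 < n := by
  obtain ⟨hne, hb, hc⟩ := h
  cases l with
  | nil => exact absurd rfl hne
  | cons x xs =>
    have h1 := head_add_le (e + 1) n xs x hc (fun z hz => (hb z hz).2)
    have h2 : xs.length ≤ (e + 1) * xs.length := Nat.le_mul_of_pos_left _ (by omega)
    have h3 : 1 ≤ x := (hb x (by simp)).1
    rw [List.length_cons, Nat.succ_sub_one]
    generalize (e + 1) * xs.length = A at h1 h2
    omega

/-- The per-length bijection between good lists of length `k+1` and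
strictly increasing lists of length `k+1` inside `[1, n - e*k]`. -/
noncomputable def fiberEquiv (n e k : ℕ) :
    {l : List ℕ // Good n (e + 1) l ∧ l.length = k + 1} ≃
      {j : List ℕ // j ∈ (List.range' 1 (n - e * k)).sublistsLen (k + 1)} where
  toFun := fun ⟨l, h⟩ => ⟨unshift e 0 l, by
    obtain ⟨⟨hne, hb, hc⟩, hlen⟩ := h
    haveI : IsAntisymm ℕ (· < ·) := ⟨fun a b h h' => ((lt_asymm h) h').elim⟩
    have hcu : (unshift e 0 l).Chain' (· < ·) :=
      chain'_unshift e l 0 hc (fun x hx => (hb x hx).1.trans' (by omega))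
    have hpu : (unshift e 0 l).Pairwise (· < ·) := List.isChain_iff_pairwise.mp hcu
    rw [List.mem_sublistsLen]
    constructor
    · apply List.sublist_of_subperm_of_pairwise (r := (· < ·))
      · apply List.Nodup.subperm
        · exact hpu.imp ne_of_lt
        · intro y hy
          rw [List.mem_range'_1]
          constructor
          · exact mem_unshift_ge e l 0 hc (fun x hx => by simpa using (hb x hx).1) y hy
          · have h1 := mem_unshift_le e n l 0 hc (fun x hx => (hb x hx).2) y hy
            rw [hlen, Nat.succ_sub_one, Nat.sub_zero] at h1
            omega
      · exact hpu
      · exact List.pairwise_lt_range' (s := 1) (n := n - e * k)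
    · rw [length_unshift, hlen]⟩
  invFun := fun ⟨j, h⟩ => ⟨shift e 0 j, by
    rw [List.mem_sublistsLen] at h
    obtain ⟨hsub, hlen⟩ := h
    have hlenle : k + 1 ≤ n - e * k := by
      have := hsub.length_le
      rw [hlen, List.length_range'] at this
      exact this
    have hjp : j.Pairwise (· < ·) := (List.pairwise_lt_range' (s := 1) (n := n - e * k)).sublist hsub
    have hjc : j.Chain' (· < ·) := List.isChain_iff_pairwise.mpr hjp
    have hjm : ∀ x ∈ j, 1 ≤ x ∧ x < 1 + (n - e * k) := by
      intro x hx
      have := hsub.subset hx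
      rwa [List.mem_range'_1] at this
    refine ⟨⟨?_, ?_, ?_⟩, ?_⟩
    · have : (shift e 0 j).length = k + 1 := by rw [length_shift, hlen]
      intro hnil
      rw [hnil] at this
      simp at this
    · intro y hy
      constructor
      · exact mem_shift_ge e 0 j (fun x hx => (hjm x hx).1) y hy
      · have h1 := mem_shift_le e (n - e * k) j 0 k
          (fun x hx => by have := (hjm x hx).2; omega) (by omega) y hy
        generalize e * k = A at h1 hlenle
        omega
    · exact chain'_shift e 0 j hjc
    · rw [length_shift, hlen]⟩
  left_inv := fun ⟨l, h⟩ =>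
    Subtype.ext (shift_unshift e 0 l h.1.2.2 (fun x _ => Nat.zero_le x))
  right_inv := fun ⟨j, _⟩ => Subtype.ext (unshift_shift e 0 j)

/-- Bundling good lists by their length. -/
noncomputable def sigmaEquiv (n e : ℕ) (hn : 0 < n) :
    {l : List ℕ // Good n (e + 1) l} ≃
      Σ k : Fin n, {l : List ℕ // Good n (e + 1) l ∧ l.length = (k : ℕ) + 1} where
  toFun a := ⟨⟨a.1.length - 1, good_length_lt n e hn a.2⟩, ⟨a.1, a.2, by
    have h1 : a.1 ≠ [] := a.2.1
    have h2 : a.1.length ≠ 0 := by simpa using h1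
    show a.1.length = a.1.length - 1 + 1
    omega⟩⟩
  invFun x := ⟨x.2.1, x.2.2.1⟩
  left_inv a := rfl
  right_inv := by
    rintro ⟨⟨k, hk⟩, l, hG, hlen⟩
    obtain rfl : k = l.length - 1 := by
      rw [show ((⟨k, hk⟩ : Fin n) : ℕ) = k from rfl] at hlen
      omega
    rfl

lemma card_target (m s : ℕ) :
    Nat.card {j : List ℕ // j ∈ (List.range' 1 m).sublistsLen s} = m.choose s := by
  have hnd : ((List.range' 1 m).sublistsLen s).Nodup :=
    List.nodup_sublistsLen s (List.nodup_range')
  rw [Nat.card_congr (List.Nodup.getEquiv _ hnd).symm, Nat.card_eq_fintype_card,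
    Fintype.card_fin, List.length_sublistsLen, List.length_range']

end SuperD

open SuperD in
/-- For `1 ≤ d ≤ n`, the super-`d`-complexity of a rainbow word of length `n`
is `K(n, {d,…,n-1}) = Σ_{k≥0} C(n-(d-1)k, k+1)`. -/
theorem super_d_complexity (n d : ℕ) (hd : 0 < d) (hdn : d ≤ n) :
    MComplexity n (Set.Icc d (n - 1)) =
      ∑ᶠ k : ℕ, Nat.choose (n - (d - 1) * k) (k + 1) := by
  obtain ⟨e, rfl⟩ : ∃ e, d = e + 1 := ⟨d - 1, by omega⟩
  have hn : 0 < n := by omega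
  have hsimp : (e + 1 - 1 : ℕ) = e := by omega
  rw [hsimp]
  -- the big equivalence
  have E1 : {l : List ℕ // IsMSubword n (Set.Icc (e + 1) (n - 1)) l} ≃
      {l : List ℕ // Good n (e + 1) l} :=
    Equiv.subtypeEquivRight (fun l => isMSubword_iff n (e + 1) hd l)
  have E4 : ∀ k : Fin n,
      {j : List ℕ // j ∈ (List.range' 1 (n - e * (k : ℕ))).sublistsLen ((k : ℕ) + 1)} ≃
        Fin ((n - e * (k : ℕ)).choose ((k : ℕ) + 1)) := by
    intro k
    refine ((List.Nodup.getEquiv _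
      (List.nodup_sublistsLen _ (List.nodup_range'))).symm).trans (finCongr ?_)
    rw [List.length_sublistsLen, List.length_range']
  have E : {l : List ℕ // IsMSubword n (Set.Icc (e + 1) (n - 1)) l} ≃
      Σ k : Fin n, Fin ((n - e * (k : ℕ)).choose ((k : ℕ) + 1)) :=
    ((E1.trans (sigmaEquiv n e hn)).trans
      (Equiv.sigmaCongrRight (fun k => fiberEquiv n e (k : ℕ)))).trans
      (Equiv.sigmaCongrRight E4)
  have hsupp : Function.support (fun k : ℕ => (n - e * k).choose (k + 1)) ⊆
      ↑(Finset.range n) := by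
    intro k hk
    simp only [Finset.coe_range, Set.mem_Iio]
    by_contra h
    push_neg at h
    apply hk
    apply Nat.choose_eq_zero_of_lt
    have : n - e * k ≤ n := Nat.sub_le _ _
    omega
  calc MComplexity n (Set.Icc (e + 1) (n - 1))
      = Nat.card (Σ k : Fin n, Fin ((n - e * (k : ℕ)).choose ((k : ℕ) + 1))) :=
        Nat.card_congr E
    _ = ∑ k : Fin n, (n - e * (k : ℕ)).choose ((k : ℕ) + 1) := by
        rw [Nat.card_eq_fintype_card, Fintype.card_sigma]
        simp
    _ = ∑ k ∈ Finset.range n, (n - e * k).choose (k + 1) :=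
        Fin.sum_univ_eq_sum_range (fun k => (n - e * k).choose (k + 1)) n
    _ = ∑ᶠ k : ℕ, (n - e * k).choose (k + 1) :=
        (finsum_eq_sum_of_support_subset _ hsupp).symm
end

section
/- For positive integers n and d with n ≥ 2d−2, the (n−d)-complexity of a rainbow word of length n satisfies K(n, {1, 2, …, n−d}) = 2^n − (d−2)·2^{d−1} − 2. -/
/-- A finset has small gaps: every adjacent pair differs by at most `m`. -/
def GoodP (m : ℕ) (S : Finset ℕ) : Prop :=
  ∀ a ∈ S, ∀ b ∈ S, a < b → (∀ c ∈ S, c ≤ a ∨ b ≤ c) → b - a ≤ m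

instance (m : ℕ) : DecidablePred (GoodP m) := fun _ => by
  unfold GoodP; infer_instance

/-- For a strictly sorted list, a `Chain'` condition is equivalent to the
condition on all "adjacent" pairs. -/
lemma chain'_iff_adj (R : ℕ → ℕ → Prop) :
    ∀ (l : List ℕ), l.Pairwise (· < ·) →
    (List.Chain' R l ↔
      ∀ a ∈ l, ∀ b ∈ l, a < b → (∀ c ∈ l, c ≤ a ∨ b ≤ c) → R a b)
  | [], _ => by simp [List.Chain']
  | [x], _ => by
      simp only [List.Chain', List.isChain_singleton, List.mem_singleton, true_iff]
      rintro a rfl b rfl hab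
      omega
  | x :: y :: t, hs => by
      have hxall : ∀ c ∈ y :: t, x < c := (List.pairwise_cons.mp hs).1
      have hs' : (y :: t).Pairwise (· < ·) := (List.pairwise_cons.mp hs).2
      have hyall : ∀ c ∈ t, y < c := (List.pairwise_cons.mp hs').1
      have hxy : x < y := hxall y (by simp)
      rw [show List.Chain' R (x :: y :: t) ↔ R x y ∧ List.Chain' R (y :: t) from
        List.isChain_cons_cons, chain'_iff_adj R (y :: t) hs']
      constructor
      · rintro ⟨hRxy, ih⟩ a ha b hb hab hadj
        rcases List.mem_cons.mp ha with rfl | ha'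
        · rcases List.mem_cons.mp hb with rfl | hb'
          · omega
          · have hy : b ≤ y := by
              rcases hadj y (by simp) with h | h
              · omega
              · exact h
            have hyb : y ≤ b := by
              rcases List.mem_cons.mp hb' with rfl | hb''
              · exact le_rfl
              · exact (hyall b hb'').le
            have : b = y := le_antisymm hy hyb
            subst this
            exact hRxy
        · have hb' : b ∈ y :: t := by
            rcases List.mem_cons.mp hb with rfl | hb''
            · exact absurd (hxall a ha') (by omega)
            · exact hb''
          exact ih a ha' b hb' hab (fun c hc => hadj c (List.mem_cons_of_mem _ hc))
      · intro H
        refine ⟨?_, ?_⟩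
        · apply H x (by simp) y (by simp) hxy
          intro c hc
          rcases List.mem_cons.mp hc with rfl | hc'
          · exact Or.inl le_rfl
          · rcases List.mem_cons.mp hc' with rfl | hc''
            · exact Or.inr le_rfl
            · exact Or.inr (hyall c hc'').le
        · intro a ha b hb hab hadj
          apply H a (List.mem_cons_of_mem _ ha) b (List.mem_cons_of_mem _ hb) hab
          intro c hc
          rcases List.mem_cons.mp hc with rfl | hc'
          · exact Or.inl (hxall a ha).le
          · exact hadj c hc'

/-- The `M`-complexity for `M = Icc 1 m` counts the nonempty subsets of
`Icc 1 n` with all adjacent gaps at most `m`. -/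
lemma isMSubword_toFinset {n m : ℕ} {l : List ℕ} (h : IsMSubword n (Set.Icc 1 m) l) :
    l.Pairwise (· < ·) ∧ l.toFinset ∈
      (Finset.Icc 1 n).powerset.filter (fun S => S ≠ ∅ ∧ GoodP m S) := by
  obtain ⟨hne, hmem, hchain⟩ := h
  have hchain' : l.Chain' (fun a b => a < b ∧ b - a ≤ m) := by
    refine hchain.imp (fun a b hab => ?_)
    simp only [Set.mem_Icc] at hab
    exact ⟨hab.1, hab.2.2⟩
  have hsorted : l.Pairwise (· < ·) := by
    rw [← List.isChain_iff_pairwise]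
    exact hchain'.imp (fun a b hab => hab.1)
  refine ⟨hsorted, ?_⟩
  rw [Finset.mem_filter, Finset.mem_powerset]
  refine ⟨?_, ?_, ?_⟩
  · intro x hx
    rw [List.mem_toFinset] at hx
    simpa [Finset.mem_Icc] using hmem x hx
  · simpa [← List.toFinset_eq_empty_iff] using hne
  · intro a ha b hb hab hadj
    rw [List.mem_toFinset] at ha hb
    have := (chain'_iff_adj _ l hsorted).mp hchain' a ha b hb hab
      (fun c hc => hadj c (List.mem_toFinset.mpr hc))
    exact this.2

lemma isMSubword_sort {n m : ℕ} {S : Finset ℕ}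
    (hS : S ∈ (Finset.Icc 1 n).powerset.filter (fun S => S ≠ ∅ ∧ GoodP m S)) :
    IsMSubword n (Set.Icc 1 m) (S.sort (· ≤ ·)) := by
  rw [Finset.mem_filter, Finset.mem_powerset] at hS
  obtain ⟨hsub, hne, hgood⟩ := hS
  have hsorted : (S.sort (· ≤ ·)).Pairwise (· < ·) := List.sortedLT_iff_pairwise.mp (Finset.sortedLT_sort S)
  refine ⟨?_, ?_, ?_⟩
  · intro hnil
    apply hne
    have := Finset.sort_toFinset S (· ≤ ·)
    rw [hnil] at this
    simpa using this.symm
  · intro x hx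
    rw [Finset.mem_sort] at hx
    simpa [Finset.mem_Icc] using hsub hx
  · rw [chain'_iff_adj _ _ hsorted]
    intro a ha b hb hab hadj
    rw [Finset.mem_sort] at ha hb
    refine ⟨hab, ?_⟩
    simp only [Set.mem_Icc]
    have := hgood a ha b hb hab (fun c hc => hadj c (Finset.mem_sort _ |>.mpr hc))
    omega

lemma mcomplexity_eq (n m : ℕ) :
    MComplexity n (Set.Icc 1 m) =
      ((Finset.Icc 1 n).powerset.filter (fun S => S ≠ ∅ ∧ GoodP m S)).card := by
  classical
  rw [← Nat.card_eq_finsetCard]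
  apply Nat.card_congr
  refine ⟨fun l => ⟨l.1.toFinset, (isMSubword_toFinset l.2).2⟩,
    fun S => ⟨S.1.sort (· ≤ ·), isMSubword_sort S.2⟩, ?_, ?_⟩
  · rintro ⟨l, hl⟩
    have hsorted := (isMSubword_toFinset hl).1
    have hnd : l.Nodup := hsorted.nodup
    simp only [Subtype.mk.injEq]
    exact (List.toFinset_sort (· ≤ ·) hnd).mpr (hsorted.imp (fun h => le_of_lt h))
  · rintro ⟨S, hS⟩
    simp only [Subtype.mk.injEq]
    exact Finset.sort_toFinset S _

/-- The block of bad sets attached to a gap pair. -/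
def gBlock (n : ℕ) (p : ℕ × ℕ) : Finset (Finset ℕ) :=
  ((Finset.Icc 1 (p.1 - 1)).powerset ×ˢ (Finset.Icc (p.2 + 1) n).powerset).image
    (fun q => insert p.1 (insert p.2 (q.1 ∪ q.2)))

def gapPairs (n m : ℕ) : Finset (ℕ × ℕ) :=
  (Finset.Icc 1 n ×ˢ Finset.Icc 1 n).filter (fun p => p.1 + m + 1 ≤ p.2)

lemma mem_gBlock {n m : ℕ} {p : ℕ × ℕ} (hp : p ∈ gapPairs n m) {S : Finset ℕ}
    (hS : S ∈ gBlock n p) :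
    p.1 ∈ S ∧ p.2 ∈ S ∧ p.1 < p.2 ∧ m + 1 ≤ p.2 - p.1 ∧
      (∀ c ∈ S, c ≤ p.1 ∨ p.2 ≤ c) ∧ (∀ x ∈ S, 1 ≤ x ∧ x ≤ n) := by
  simp only [gapPairs, Finset.mem_filter, Finset.mem_product, Finset.mem_Icc] at hp
  obtain ⟨⟨⟨ha1, ha2⟩, hb1, hb2⟩, hgap⟩ := hp
  simp only [gBlock, Finset.mem_image, Finset.mem_product, Finset.mem_powerset,
    Prod.exists] at hS
  obtain ⟨A, B, ⟨hA, hB⟩, rfl⟩ := hS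
  have hmem : ∀ c, c ∈ insert p.1 (insert p.2 (A ∪ B)) ↔
      c = p.1 ∨ c = p.2 ∨ c ∈ A ∨ c ∈ B := by
    intro c
    simp [Finset.mem_insert, Finset.mem_union, or_assoc]
  refine ⟨by simp, by simp, by omega, by omega, ?_, ?_⟩
  · intro c hc
    rcases (hmem c).mp hc with rfl | rfl | hc | hc
    · exact Or.inl le_rfl
    · exact Or.inr le_rfl
    · have := Finset.mem_Icc.mp (hA hc); omega
    · have := Finset.mem_Icc.mp (hB hc); omega
  · intro c hc
    rcases (hmem c).mp hc with rfl | rfl | hc | hc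
    · omega
    · omega
    · have := Finset.mem_Icc.mp (hA hc); omega
    · have := Finset.mem_Icc.mp (hB hc); omega

lemma gap_unique' {n m : ℕ} (h2 : n ≤ 2 * m + 2) {S : Finset ℕ}
    (hS : ∀ x ∈ S, 1 ≤ x ∧ x ≤ n) {a b a' b' : ℕ}
    (ha : a ∈ S) (hb : b ∈ S) (hab : a < b) (hgap : m + 1 ≤ b - a)
    (hadj : ∀ c ∈ S, c ≤ a ∨ b ≤ c)
    (ha' : a' ∈ S) (hb' : b' ∈ S) (hab' : a' < b') (hgap' : m + 1 ≤ b' - a')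
    (hadj' : ∀ c ∈ S, c ≤ a' ∨ b' ≤ c) :
    a = a' ∧ b = b' := by
  have h1 := hadj a' ha'
  have h2' := hadj' a ha
  have h3 := hadj b' hb'
  have h4 := hadj' b hb
  have := hS a ha
  have := hS b hb
  have := hS a' ha'
  have := hS b' hb'
  omega

lemma bad_eq_biUnion (n m : ℕ) :
    (Finset.Icc 1 n).powerset.filter (fun S => S ≠ ∅ ∧ ¬ GoodP m S)
      = (gapPairs n m).biUnion (gBlock n) := by
  ext S
  constructor
  · intro hS
    rw [Finset.mem_filter, Finset.mem_powerset] at hS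
    obtain ⟨hsub, hne, hbad⟩ := hS
    unfold GoodP at hbad
    push_neg at hbad
    obtain ⟨a, ha, b, hb, hab, hadj, hgap⟩ := hbad
    have hax := Finset.mem_Icc.mp (hsub ha)
    have hbx := Finset.mem_Icc.mp (hsub hb)
    rw [Finset.mem_biUnion]
    refine ⟨(a, b), ?_, ?_⟩
    · simp only [gapPairs, Finset.mem_filter, Finset.mem_product, Finset.mem_Icc]
      exact ⟨⟨hax, hbx⟩, by omega⟩
    · simp only [gBlock, Finset.mem_image, Finset.mem_product, Finset.mem_powerset,
        Prod.exists]
      refine ⟨S.filter (fun c => c < a), S.filter (fun c => b < c), ⟨?_, ?_⟩, ?_⟩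
      · intro c hc
        rw [Finset.mem_filter] at hc
        have := Finset.mem_Icc.mp (hsub hc.1)
        rw [Finset.mem_Icc]
        omega
      · intro c hc
        rw [Finset.mem_filter] at hc
        have := Finset.mem_Icc.mp (hsub hc.1)
        rw [Finset.mem_Icc]
        omega
      · ext c
        simp only [Finset.mem_insert, Finset.mem_union, Finset.mem_filter]
        constructor
        · rintro (rfl | rfl | ⟨hc, _⟩ | ⟨hc, _⟩) <;> assumption
        · intro hc
          rcases hadj c hc with h | h
          · rcases eq_or_lt_of_le h with rfl | h'
            · exact Or.inl rfl
            · exact Or.inr (Or.inr (Or.inl ⟨hc, h'⟩))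
          · rcases eq_or_lt_of_le h with rfl | h'
            · exact Or.inr (Or.inl rfl)
            · exact Or.inr (Or.inr (Or.inr ⟨hc, h'⟩))
  · intro hS
    rw [Finset.mem_biUnion] at hS
    obtain ⟨p, hp, hSp⟩ := hS
    obtain ⟨h1, h2, h3, h4, h5, h6⟩ := mem_gBlock hp hSp
    rw [Finset.mem_filter, Finset.mem_powerset]
    refine ⟨?_, Finset.ne_empty_of_mem h1, ?_⟩
    · intro c hc
      rw [Finset.mem_Icc]
      exact h6 c hc
    · intro hgood
      have := hgood p.1 h1 p.2 h2 h3 h5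
      omega

lemma gBlock_card {n m : ℕ} {p : ℕ × ℕ} (hp : p ∈ gapPairs n m) :
    (gBlock n p).card = 2 ^ (p.1 - 1) * 2 ^ (n - p.2) := by
  simp only [gapPairs, Finset.mem_filter, Finset.mem_product, Finset.mem_Icc] at hp
  obtain ⟨⟨⟨ha1, ha2⟩, hb1, hb2⟩, hgap⟩ := hp
  rw [gBlock, Finset.card_image_of_injOn, Finset.card_product, Finset.card_powerset,
    Finset.card_powerset, Nat.card_Icc, Nat.card_Icc]
  · congr 1 <;> congr 1 <;> omega
  · rintro ⟨A, B⟩ hq ⟨A', B'⟩ hq' heq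
    have hA := Finset.mem_powerset.mp (Finset.mem_product.mp hq).1
    have hB := Finset.mem_powerset.mp (Finset.mem_product.mp hq).2
    have hA' := Finset.mem_powerset.mp (Finset.mem_product.mp hq').1
    have hB' := Finset.mem_powerset.mp (Finset.mem_product.mp hq').2
    have key : ∀ (A B : Finset ℕ), A ⊆ Finset.Icc 1 (p.1 - 1) →
        B ⊆ Finset.Icc (p.2 + 1) n →
        (insert p.1 (insert p.2 (A ∪ B))).filter (fun c => c < p.1) = A ∧
        (insert p.1 (insert p.2 (A ∪ B))).filter (fun c => p.2 < c) = B := by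
      intro A B hA hB
      constructor <;> ext c <;>
        simp only [Finset.mem_filter, Finset.mem_insert, Finset.mem_union] <;>
        constructor
      · rintro ⟨rfl | rfl | hc | hc, hlt⟩
        · omega
        · omega
        · exact hc
        · have := Finset.mem_Icc.mp (hB hc); omega
      · intro hc
        have := Finset.mem_Icc.mp (hA hc)
        exact ⟨Or.inr (Or.inr (Or.inl hc)), by omega⟩
      · rintro ⟨rfl | rfl | hc | hc, hlt⟩
        · omega
        · omega
        · have := Finset.mem_Icc.mp (hA hc); omega
        · exact hc
      · intro hc
        have := Finset.mem_Icc.mp (hB hc)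
        exact ⟨Or.inr (Or.inr (Or.inr hc)), by omega⟩
    obtain ⟨e1, e2⟩ := key A B hA hB
    obtain ⟨e1', e2'⟩ := key A' B' hA' hB'
    simp only at heq
    rw [heq] at e1 e2
    rw [e1'] at e1
    rw [e2'] at e2
    simp [e1, e2]

lemma geo_sum (k : ℕ) : (∑ j ∈ Finset.range k, (2:ℤ) ^ j) = 2 ^ k - 1 := by
  induction k with
  | zero => simp
  | succ k ih => rw [Finset.sum_range_succ, ih]; ring

lemma bad_card (n d m : ℕ) (hm : n = m + d) (hd : 0 < d) (h2 : n ≤ 2 * m + 2) :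
    ((((Finset.Icc 1 n).powerset.filter
        (fun S => S ≠ ∅ ∧ ¬ GoodP m S)).card : ℤ)) =
      ((d : ℤ) - 2) * 2 ^ (d - 1) + 1 := by
  classical
  rw [bad_eq_biUnion n m]
  have hdisj : ∀ p ∈ gapPairs n m, ∀ q ∈ gapPairs n m, p ≠ q →
      Disjoint (gBlock n p) (gBlock n q) := by
    intro p hp q hq hpq
    rw [Finset.disjoint_left]
    intro S hSp hSq
    obtain ⟨h1, h2', h3, h4, h5, h6⟩ := mem_gBlock hp hSp
    obtain ⟨g1, g2', g3, g4, g5, _⟩ := mem_gBlock hq hSq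
    obtain ⟨e1, e2⟩ := gap_unique' h2 h6 h1 h2' h3 h4 h5 g1 g2' g3 g4 g5
    exact hpq (Prod.ext e1 e2)
  rw [Finset.card_biUnion hdisj]
  have hcards : ∀ p ∈ gapPairs n m, (gBlock n p).card = 2 ^ (p.1 - 1) * 2 ^ (n - p.2) :=
    fun p hp => gBlock_card hp
  rw [Finset.sum_congr rfl hcards]
  push_cast
  -- reindex to pairs'
  have hre : (∑ p ∈ gapPairs n m, (2:ℤ) ^ (p.1 - 1) * 2 ^ (n - p.2)) =
      ∑ q ∈ (Finset.range n ×ˢ Finset.range n).filter (fun q => q.1 + q.2 + 2 ≤ d),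
        (2:ℤ) ^ q.1 * 2 ^ q.2 := by
    refine Finset.sum_nbij' (fun p => (p.1 - 1, n - p.2)) (fun q => (q.1 + 1, n - q.2))
      ?_ ?_ ?_ ?_ ?_
    · intro p hp
      simp only [gapPairs, Finset.mem_filter, Finset.mem_product, Finset.mem_Icc] at hp
      simp only [Finset.mem_filter, Finset.mem_product, Finset.mem_range]
      omega
    · intro q hq
      simp only [Finset.mem_filter, Finset.mem_product, Finset.mem_range] at hq
      simp only [gapPairs, Finset.mem_filter, Finset.mem_product, Finset.mem_Icc]
      omega
    · intro p hp
      simp only [gapPairs, Finset.mem_filter, Finset.mem_product, Finset.mem_Icc] at hp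
      ext <;> simp <;> omega
    · intro q hq
      simp only [Finset.mem_filter, Finset.mem_product, Finset.mem_range] at hq
      ext <;> simp <;> omega
    · intro p hp
      rfl
  rw [hre]
  have hsplit : (Finset.range n ×ˢ Finset.range n).filter (fun q => q.1 + q.2 + 2 ≤ d)
      = (Finset.range (d - 1)).biUnion
          (fun i => ({i} : Finset ℕ) ×ˢ Finset.range (d - 1 - i)) := by
    ext q
    simp only [Finset.mem_filter, Finset.mem_product, Finset.mem_range,
      Finset.mem_biUnion, Finset.mem_singleton]
    constructor
    · rintro ⟨⟨h1', h2'⟩, h3⟩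
      exact ⟨q.1, by omega, rfl, by omega⟩
    · rintro ⟨i, hi, hq⟩
      omega
  rw [hsplit]
  rw [Finset.sum_biUnion]
  · have hinner : ∀ i ∈ Finset.range (d - 1),
        (∑ q ∈ ({i} : Finset ℕ) ×ˢ Finset.range (d - 1 - i), (2:ℤ) ^ q.1 * 2 ^ q.2)
          = 2 ^ (d - 1) - 2 ^ i := by
      intro i hi
      rw [Finset.mem_range] at hi
      rw [Finset.sum_product, Finset.sum_singleton]
      have hbeta : (∑ y ∈ Finset.range (d - 1 - i), (2:ℤ) ^ (i, y).1 * 2 ^ (i, y).2)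
          = ∑ y ∈ Finset.range (d - 1 - i), (2:ℤ) ^ i * 2 ^ y := rfl
      rw [hbeta, ← Finset.mul_sum, geo_sum]
      have : i + (d - 1 - i) = d - 1 := by omega
      rw [mul_sub, ← pow_add, this]
      ring
    rw [Finset.sum_congr rfl hinner, Finset.sum_sub_distrib, Finset.sum_const,
      Finset.card_range, geo_sum, nsmul_eq_mul]
    have : ((d - 1 : ℕ) : ℤ) = (d : ℤ) - 1 := by omega
    rw [this]
    ring
  · intro i hi j hj hij
    simp only [Function.onFun]
    rw [Finset.disjoint_left]
    intro q hqi hqj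
    simp only [Finset.mem_product, Finset.mem_singleton] at hqi hqj
    exact hij (hqi.1 ▸ hqj.1)

/-- For positive `n`, `d` with `n ≥ 2d - 2`, the `(n-d)`-complexity of a
rainbow word of length `n` is `K(n, {1,…,n-d}) = 2^n - (d-2)·2^(d-1) - 2`. -/
theorem n_sub_d_complexity (n d : ℕ) (hn : 0 < n) (hd : 0 < d)
    (h : 2 * d ≤ n + 2) :
    (MComplexity n (Set.Icc 1 (n - d)) : ℤ) =
      2 ^ n - ((d : ℤ) - 2) * 2 ^ (d - 1) - 2 := by
  classical
  have hdn : d ≤ n := by omega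
  set m := n - d with hmdef
  have hm : n = m + d := by omega
  have h2 : n ≤ 2 * m + 2 := by omega
  rw [mcomplexity_eq n m]
  have hsplit :
      ((Finset.Icc 1 n).powerset.filter (fun S => S ≠ ∅ ∧ GoodP m S)).card +
        ((Finset.Icc 1 n).powerset.filter (fun S => S ≠ ∅ ∧ ¬ GoodP m S)).card =
      ((Finset.Icc 1 n).powerset.filter (fun S => S ≠ ∅)).card := by
    rw [← Finset.filter_filter, ← Finset.filter_filter]
    exact Finset.card_filter_add_card_filter_not (GoodP m)
  have hN : ((Finset.Icc 1 n).powerset.filter (fun S => (S : Finset ℕ) ≠ ∅)).card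
      = 2 ^ n - 1 := by
    have : (Finset.Icc 1 n).powerset.filter (fun S => (S : Finset ℕ) ≠ ∅)
        = (Finset.Icc 1 n).powerset.erase ∅ := by
      ext S
      simp [Finset.mem_erase, and_comm]
    rw [this, Finset.card_erase_of_mem (by simp), Finset.card_powerset,
      Nat.card_Icc]
    simp
  have hbad := bad_card n d m hm hd h2
  have hpow : (1 : ℕ) ≤ 2 ^ n := Nat.one_le_two_pow
  have hcast : (((Finset.Icc 1 n).powerset.filter
      (fun S => S ≠ ∅ ∧ GoodP m S)).card : ℤ)
      = (2 ^ n - 1 : ℤ) - (((Finset.Icc 1 n).powerset.filter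
        (fun S => S ≠ ∅ ∧ ¬ GoodP m S)).card : ℤ) := by
    have := congrArg (fun k : ℕ => (k : ℤ)) hsplit
    push_cast at this ⊢
    rw [hN] at this
    push_cast [hpow] at this
    linarith
  rw [hcast, hbad]
  ring
end

section
/- Let n be a positive integer, M ⊆ {1,2,…,n−1}, and let A be the n×n matrix with A_{ij} = 1 if j−i ∈ M and A_{ij} = 0 otherwise. Then the M-complexity of a rainbow word of length n equals the sum of all entries of the matrix R = I + A + A² + … + A^{n−1}, i.e., K(n,M) = Σ_{i=1}^{n} Σ_{j=1}^{n} R_{ij}. (Note A^n = 0 since A is strictly upper triangular, so the sum may be truncated at any exponent k with A^{k+1} = 0.) -/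
section AuxLemmas
open Classical

/-- Paths of `t` steps from `i` to `j` in the digraph with relation `r`. -/
def PathSet (n : ℕ) (r : Fin n → Fin n → Prop) (t : ℕ) (i j : Fin n) : Type :=
  {l : List (Fin n) // l.length = t + 1 ∧ l.head? = some i ∧ l.getLast? = some j ∧ l.Chain' r}

instance PathSet.finite (n : ℕ) (r : Fin n → Fin n → Prop) (t : ℕ) (i j : Fin n) :
    Finite (PathSet n r t i j) := by
  have h := List.finite_length_eq (Fin n) (t + 1)
  haveI := h.to_subtype
  exact Finite.of_injective
    (fun l => (⟨l.1, l.2.1⟩ : {l : List (Fin n) | l.length = t + 1}))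
    (fun a b hab => Subtype.ext (by simpa using congrArg Subtype.val hab))

lemma card_pathSet_zero (n : ℕ) (r : Fin n → Fin n → Prop) (i j : Fin n) :
    Nat.card (PathSet n r 0 i j) = if i = j then 1 else 0 := by
  split_ifs with h
  · subst h
    rw [Nat.card_eq_one_iff_unique]
    constructor
    · constructor
      intro a b
      obtain ⟨x, hx⟩ := List.length_eq_one_iff.1 a.2.1
      obtain ⟨y, hy⟩ := List.length_eq_one_iff.1 b.2.1
      have ha := a.2.2.1
      have hb := b.2.2.1
      rw [hx] at ha; rw [hy] at hb
      simp only [List.head?_cons, Option.some.injEq] at ha hb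
      exact Subtype.ext (by rw [hx, hy, ha, hb])
    · exact ⟨⟨[i], by simp; exact List.isChain_singleton i⟩⟩
  · rw [Nat.card_eq_zero]
    left
    constructor
    intro a
    obtain ⟨x, hx⟩ := List.length_eq_one_iff.1 a.2.1
    have h1 := a.2.2.1
    have h2 := a.2.2.2.1
    rw [hx] at h1 h2
    simp only [List.head?_cons, List.getLast?_singleton, Option.some.injEq] at h1 h2
    exact h (h1.symm.trans h2)

lemma nat_card_sigma {ι : Type*} [Fintype ι] (f : ι → Type*) [∀ i, Finite (f i)] :
    Nat.card (Σ i, f i) = ∑ i, Nat.card (f i) := by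
  letI : ∀ i, Fintype (f i) := fun i => Fintype.ofFinite _
  simp [Nat.card_eq_fintype_card, Fintype.card_sigma]

lemma nat_card_plift_prop (p : Prop) : Nat.card (PLift p) = if p then 1 else 0 := by
  split_ifs with h
  · letI : Unique (PLift p) := ⟨⟨⟨h⟩⟩, fun _ => rfl⟩
    exact Nat.card_unique
  · haveI : IsEmpty (PLift p) := ⟨fun x => h x.down⟩
    exact Nat.card_of_isEmpty

lemma card_pathSet_succ (n : ℕ) (r : Fin n → Fin n → Prop) (t : ℕ) (i j : Fin n) :
    Nat.card (PathSet n r (t + 1) i j) =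
      ∑ k, (if r i k then 1 else 0) * Nat.card (PathSet n r t k j) := by
  have key : Nat.card (Σ k : Fin n, PLift (r i k) × PathSet n r t k j) =
      Nat.card (PathSet n r (t + 1) i j) := by
    apply Nat.card_eq_of_bijective
      (fun x => (⟨i :: x.2.2.1, by
        refine ⟨by simp [x.2.2.2.1], rfl, ?_, ?_⟩
        · obtain ⟨l, hlen, hh, hl, hc⟩ := x.2.2
          match l, hlen with
          | b :: l'', _ => simpa using hl
        · refine List.isChain_cons.2 ⟨?_, x.2.2.2.2.2.2⟩
          intro y hy
          rw [x.2.2.2.2.1] at hy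
          cases hy
          exact x.2.1.down⟩ : PathSet n r (t + 1) i j))
    constructor
    · rintro ⟨k₁, h₁, l₁⟩ ⟨k₂, h₂, l₂⟩ hab
      have hl : l₁.1 = l₂.1 := by
        have := congrArg Subtype.val hab
        simpa using this
      have hk : k₁ = k₂ := by
        have e1 := l₁.2.2.1
        have e2 := l₂.2.2.1
        rw [hl] at e1
        rw [e1] at e2
        exact Option.some.inj e2
      subst hk
      simp only [Sigma.mk.inj_iff, heq_eq_eq, Prod.ext_iff, true_and]
      exact ⟨Subsingleton.elim _ _, Subtype.ext hl⟩
    · rintro ⟨l, hlen, hh, hl, hc⟩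
      match l, hlen, hh, hl, hc with
      | a :: b :: l'', hlen, hh, hl, hc =>
        have ha : a = i := by simpa using hh
        subst ha
        have hrab : r a b ∧ (b :: l'').Chain' r := List.isChain_cons_cons.1 hc
        refine ⟨⟨b, ⟨⟨hrab.1⟩, ⟨b :: l'', by simpa using hlen, rfl, by simpa using hl,
          hrab.2⟩⟩⟩, ?_⟩
        rfl
  rw [← key, nat_card_sigma]
  congr 1
  ext k
  rw [Nat.card_prod, nat_card_plift_prop]

lemma pow_apply_eq_card (n : ℕ) (r : Fin n → Fin n → Prop) (A : Matrix (Fin n) (Fin n) ℕ)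
    (hA : ∀ i j, A i j = if r i j then 1 else 0) :
    ∀ (t : ℕ) (i j : Fin n), (A ^ t) i j = Nat.card (PathSet n r t i j) := by
  intro t
  induction t with
  | zero =>
    intro i j
    rw [pow_zero, card_pathSet_zero]
    simp [Matrix.one_apply]
  | succ t ih =>
    intro i j
    rw [pow_succ', Matrix.mul_apply, card_pathSet_succ]
    refine Finset.sum_congr rfl fun k _ => ?_
    rw [hA, ih]

lemma card_chains (n : ℕ) (r : Fin n → Fin n → Prop) (hlt : ∀ a b, r a b → a < b) :
    Nat.card {l : List (Fin n) // l ≠ [] ∧ l.Chain' r} =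
      ∑ t ∈ Finset.range n, ∑ i, ∑ j, Nat.card (PathSet n r t i j) := by
  have key : Nat.card (Σ t : Fin n, Σ i : Fin n, Σ j : Fin n, PathSet n r t i j) =
      Nat.card {l : List (Fin n) // l ≠ [] ∧ l.Chain' r} := by
    apply Nat.card_eq_of_bijective
      (fun x => ⟨x.2.2.2.1, by
        refine ⟨?_, x.2.2.2.2.2.2.2⟩
        have := x.2.2.2.2.1
        intro hnil
        rw [hnil] at this
        simp at this⟩)
    constructor
    · rintro ⟨t₁, i₁, j₁, l₁⟩ ⟨t₂, i₂, j₂, l₂⟩ hab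
      have hl : l₁.1 = l₂.1 := by simpa using congrArg Subtype.val hab
      have ht : t₁ = t₂ := by
        have e1 := l₁.2.1
        have e2 := l₂.2.1
        rw [hl] at e1
        rw [e1] at e2
        exact Fin.ext (by omega)
      subst ht
      have hi : i₁ = i₂ := by
        have e1 := l₁.2.2.1
        have e2 := l₂.2.2.1
        rw [hl] at e1; rw [e1] at e2
        exact Option.some.inj e2
      have hj : j₁ = j₂ := by
        have e1 := l₁.2.2.2.1
        have e2 := l₂.2.2.2.1
        rw [hl] at e1; rw [e1] at e2
        exact Option.some.inj e2
      subst hi; subst hj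
      simp only [Sigma.mk.inj_iff, heq_eq_eq, true_and]
      exact Subtype.ext hl
    · rintro ⟨l, hne, hc⟩
      have hlen : l.length ≤ n := by
        have hnd : l.Nodup := by
          have : l.Pairwise (· < ·) :=
            List.isChain_iff_pairwise.1 (hc.imp hlt)
          exact this.imp ne_of_lt
        simpa using hnd.length_le_card
      have hpos : 0 < l.length := List.length_pos_iff.2 hne
      refine ⟨⟨⟨l.length - 1, by omega⟩, l.head hne, l.getLast hne,
        ⟨l, by simp; omega, List.head?_eq_head hne, List.getLast?_eq_getLast_of_ne_nil hne,
          hc⟩⟩, rfl⟩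
  rw [← key, nat_card_sigma, ← Fin.sum_univ_eq_sum_range]
  refine Finset.sum_congr rfl fun t _ => ?_
  rw [nat_card_sigma]
  refine Finset.sum_congr rfl fun i _ => ?_
  rw [nat_card_sigma]

lemma exists_preimage (n : ℕ) :
    ∀ l' : List ℕ, (∀ x ∈ l', 1 ≤ x ∧ x ≤ n) →
      ∃ l : List (Fin n), l.map (fun i : Fin n => (i : ℕ) + 1) = l' := by
  intro l'
  induction l' with
  | nil => exact fun _ => ⟨[], rfl⟩
  | cons x xs ih =>
    intro h
    obtain ⟨l, hl⟩ := ih fun y hy => h y (List.mem_cons_of_mem _ hy)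
    have hx := h x (List.mem_cons_self)
    refine ⟨⟨x - 1, by omega⟩ :: l, ?_⟩
    rw [List.map_cons, hl]
    congr 1
    show x - 1 + 1 = x
    omega

lemma card_subwords (n : ℕ) (hn : 0 < n) (M : Set ℕ) (hM : M ⊆ Set.Icc 1 (n - 1)) :
    Nat.card {l : List ℕ // IsMSubword n M l} =
      Nat.card {l : List (Fin n) // l ≠ [] ∧
        l.Chain' (fun i j : Fin n => ((j : ℕ) - (i : ℕ)) ∈ M)} := by
  set r : Fin n → Fin n → Prop := fun i j => ((j : ℕ) - (i : ℕ)) ∈ M with hr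
  apply (Nat.card_eq_of_bijective
    (fun x : {l : List (Fin n) // l ≠ [] ∧ l.Chain' r} =>
      (⟨x.1.map (fun i : Fin n => (i : ℕ) + 1), by
        obtain ⟨l, hne, hc⟩ := x
        refine ⟨by simpa using hne, ?_, ?_⟩
        · intro y hy
          obtain ⟨i, _, rfl⟩ := List.mem_map.1 hy
          have := i.2
          omega
        · simp only [List.Chain', List.isChain_map]
          refine hc.imp fun a b hab => ?_
          have hab' : (b : ℕ) - (a : ℕ) ∈ M := hab
          have h1 := hM hab'
          simp only [Set.mem_Icc] at h1
          have : (a : ℕ) < (b : ℕ) := by omega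
          constructor
          · omega
          · have : (b : ℕ) + 1 - ((a : ℕ) + 1) = (b : ℕ) - (a : ℕ) := by omega
            rw [this]
            exact hab'⟩ : {l : List ℕ // IsMSubword n M l})) ?_).symm
  constructor
  · rintro ⟨l₁, h₁⟩ ⟨l₂, h₂⟩ hab
    have : l₁.map (fun i : Fin n => (i : ℕ) + 1) = l₂.map (fun i : Fin n => (i : ℕ) + 1) :=
      congrArg Subtype.val hab
    refine Subtype.ext (List.map_injective_iff.2 ?_ this)
    intro a b h
    exact Fin.ext (by simpa using h)
  · rintro ⟨l', hne, hbd, hc⟩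
    obtain ⟨l, hl⟩ := exists_preimage n l' hbd
    refine ⟨⟨l, ?_, ?_⟩, Subtype.ext hl⟩
    · intro h
      rw [h] at hl
      exact hne hl.symm
    · rw [← hl] at hc
      simp only [List.Chain', List.isChain_map] at hc
      refine hc.imp fun a b hab => ?_
      have : (b : ℕ) + 1 - ((a : ℕ) + 1) = (b : ℕ) - (a : ℕ) := by omega
      rw [this] at hab
      exact hab.2

end AuxLemmas

open Classical in
/-- With `A` the adjacency matrix on the `n` positions `1,…,n` (represented by
`Fin n`, position `i` corresponding to `i.val + 1`) given by `A i j = 1` iff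
the gap `j - i ∈ M`, the `M`-complexity of a rainbow word of length `n` equals
the sum of all entries of `R = I + A + A² + ⋯ + A^(n-1)`. -/
theorem M_complexity_eq_sum_matrix_entries (n : ℕ) (hn : 0 < n) (M : Set ℕ)
    (hM : M ⊆ Set.Icc 1 (n - 1)) (A : Matrix (Fin n) (Fin n) ℕ)
    (hA : ∀ i j : Fin n, A i j = if (j : ℕ) - (i : ℕ) ∈ M then 1 else 0) :
    MComplexity n M = ∑ i, ∑ j, (∑ t ∈ Finset.range n, A ^ t) i j := by
  have hlt : ∀ a b : Fin n, ((b : ℕ) - (a : ℕ) ∈ M) → a < b := by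
    intro a b h
    have := hM h
    simp only [Set.mem_Icc] at this
    exact Fin.lt_def.2 (by omega)
  have h1 := card_subwords n hn M hM
  have h2 := card_chains n (fun i j : Fin n => ((j : ℕ) - (i : ℕ)) ∈ M) hlt
  have h3 := pow_apply_eq_card n (fun i j : Fin n => ((j : ℕ) - (i : ℕ)) ∈ M) A hA
  rw [MComplexity, h1, h2]
  simp only [Matrix.sum_apply]
  have : ∀ i j : Fin n, ∑ t ∈ Finset.range n, (A ^ t) i j =
      ∑ t ∈ Finset.range n,
        Nat.card (PathSet n (fun i j : Fin n => ((j : ℕ) - (i : ℕ)) ∈ M) t i j) :=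
    fun i j => Finset.sum_congr rfl fun t _ => h3 t i j
  simp only [this]
  rw [Finset.sum_comm]
  exact Finset.sum_congr rfl fun i _ => Finset.sum_comm
end

section
/- Fix positive integers d₁ ≤ d₂ and let a_i denote the number of (d₁,d₂)-subwords of a rainbow word that terminate at position i (with a_i = 0 for i ≤ 0). Then for every i ≥ 2, a_i = a_{i−1} + a_{i−d₁} − a_{i−1−d₂}. -/
/-- `endCount d₁ d₂ i` is the number of `(d₁,d₂)`-subwords of a rainbow word
terminating at position `i`: the number of nonempty strictly increasing
sequences `1 ≤ i₁ < i₂ < ⋯ < i_s = i` all of whose consecutive gaps lie in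
`[d₁, d₂]`.  (In particular `endCount d₁ d₂ 0 = 0`.) -/
noncomputable def endCount (d₁ d₂ i : ℕ) : ℕ :=
  Nat.card { l : List ℕ // l ≠ [] ∧ (∀ x ∈ l, 1 ≤ x) ∧
    l.Chain' (fun a b => a < b ∧ b - a ∈ Set.Icc d₁ d₂) ∧ l.getLast? = some i }

namespace EndCountAux

/-- Reversed version: lists with head `i`, strictly decreasing with gaps in `[d₁,d₂]`. -/
def T (d₁ d₂ i : ℕ) : Type := { l : List ℕ // (∀ x ∈ l, 1 ≤ x) ∧
    l.Chain' (fun b a => a < b ∧ b - a ∈ Set.Icc d₁ d₂) ∧ l.head? = some i }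

theorem endCount_eq_card_T (d₁ d₂ i : ℕ) : endCount d₁ d₂ i = Nat.card (T d₁ d₂ i) := by
  apply Nat.card_congr
  refine ⟨fun l => ⟨l.1.reverse, ?_⟩, fun l => ⟨l.1.reverse, ?_⟩, ?_, ?_⟩
  · obtain ⟨l, hne, h1, hc, hl⟩ := l
    exact ⟨fun x hx => h1 x (by simpa using hx), List.isChain_reverse.mpr hc,
      by rw [List.head?_reverse]; exact hl⟩
  · obtain ⟨l, h1, hc, hl⟩ := l
    have hne : l ≠ [] := by rintro rfl; simp at hl
    refine ⟨by simpa using hne, fun x hx => h1 x (by simpa using hx),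
      List.isChain_reverse.mpr hc, ?_⟩
    rw [← List.head?_reverse, List.reverse_reverse]; exact hl
  · intro l; exact Subtype.ext (by simp)
  · intro l; exact Subtype.ext (by simp)

variable {d₁ d₂ : ℕ}

instance instIsEmptyT0 : IsEmpty (T d₁ d₂ 0) := by
  constructor
  rintro ⟨l, h1, -, hl⟩
  have : (0 : ℕ) ∈ l := by
    cases l with
    | nil => simp at hl
    | cons a t => simp_all
  exact absurd (h1 0 this) (by norm_num)

/-- The decomposition map. -/
def g (i : ℕ) (hd₁ : 0 < d₁) (hi : 0 < i) :
    Option ((j : (Finset.Icc d₁ d₂ : Finset ℕ)) × T d₁ d₂ (i - j)) → T d₁ d₂ i :=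
  fun o => Option.elim o ⟨[i], by simpa using (show 1 ≤ i by omega), List.isChain_singleton _, rfl⟩
    (fun x => ⟨i :: x.2.1, by
      obtain ⟨j, l, h1, hc, hl⟩ := x
      refine ⟨?_, ?_, rfl⟩
      · intro y hy
        rcases List.mem_cons.1 hy with rfl | hy
        · exact hi
        · exact h1 y hy
      · unfold List.Chain'; rw [List.isChain_cons]
        refine ⟨?_, hc⟩
        intro y hy
        rw [hl, Option.mem_some_iff] at hy
        subst hy
        have hj := Finset.mem_Icc.1 j.2
        have h1ij : 1 ≤ i - (j : ℕ) := by
          cases l with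
          | nil => simp at hl
          | cons a t =>
            have ha : a = i - (j : ℕ) := by simpa using hl
            exact ha ▸ h1 a (List.mem_cons_self (a := a) (l := t))
        have hji : (j : ℕ) < i := tsub_pos_iff_lt.mp h1ij
        refine ⟨Nat.sub_lt hi (hd₁.trans_le hj.1), ?_⟩
        rw [Nat.sub_sub_self hji.le]
        exact Set.mem_Icc.2 ⟨hj.1, hj.2⟩⟩)

theorem g_none_val (i : ℕ) (hd₁ : 0 < d₁) (hi : 0 < i) : (g (d₂ := d₂) i hd₁ hi none).1 = [i] := rfl

theorem g_some_val (i : ℕ) (hd₁ : 0 < d₁) (hi : 0 < i)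
    (x : (j : (Finset.Icc d₁ d₂ : Finset ℕ)) × T d₁ d₂ (i - j)) :
    (g i hd₁ hi (some x)).1 = i :: x.2.1 := rfl

theorem head_one_le {i : ℕ} (l : T d₁ d₂ i) : 1 ≤ i := by
  obtain ⟨l, h1, -, hl⟩ := l
  cases l with
  | nil => simp at hl
  | cons a t =>
    have : a = i := by simpa using hl
    exact this ▸ h1 a (by simp)

theorem g_bijective (i : ℕ) (hd₁ : 0 < d₁) (hi : 0 < i) :
    Function.Bijective (g (d₁ := d₁) (d₂ := d₂) i hd₁ hi) := by
  constructor
  · rintro (_ | ⟨j, l⟩) (_ | ⟨j', l'⟩) h <;>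
      have hv := congrArg Subtype.val h
    · rfl
    · exfalso
      rw [g_none_val, g_some_val] at hv
      have hval : l'.1 = [] := by simpa using hv.symm
      have hh := l'.2.2.2
      rw [hval] at hh
      simp at hh
    · exfalso
      rw [g_none_val, g_some_val] at hv
      have hval : l.1 = [] := by simpa using hv
      have hh := l.2.2.2
      rw [hval] at hh
      simp at hh
    · rw [g_some_val, g_some_val] at hv
      have hll : l.1 = l'.1 := by simpa using hv
      have hjj : j = j' := by
        have h1 := head_one_le (i := i - (j : ℕ)) l
        have h1' := head_one_le (i := i - (j' : ℕ)) l'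
        have e1 := l.2.2.2
        have e2 := l'.2.2.2
        rw [← hll, e1] at e2
        have hE : i - (j : ℕ) = i - (j' : ℕ) := Option.some.inj e2
        have hji : (j : ℕ) < i := tsub_pos_iff_lt.mp h1
        have hji' : (j' : ℕ) < i := tsub_pos_iff_lt.mp (hE ▸ h1)
        refine Subtype.ext ?_
        have : i - (i - (j : ℕ)) = i - (i - (j' : ℕ)) := by rw [hE]
        rwa [Nat.sub_sub_self hji.le, Nat.sub_sub_self hji'.le] at this
      subst hjj
      have : l = l' := Subtype.ext hll
      subst this
      rfl
  · rintro ⟨l, h1, hc, hl⟩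
    cases l with
    | nil => simp at hl
    | cons a t =>
      have ha : a = i := by simpa using hl
      subst ha
      cases t with
      | nil =>
        refine ⟨none, Subtype.ext ?_⟩
        rw [g_none_val]
      | cons p t' =>
        unfold List.Chain' at hc; rw [List.isChain_cons_cons] at hc
        obtain ⟨⟨hpa, hmem⟩, hc'⟩ := hc
        rw [Set.mem_Icc] at hmem
        refine ⟨some ⟨⟨a - p, Finset.mem_Icc.2 hmem⟩, ⟨p :: t', ?_, hc', ?_⟩⟩,
          Subtype.ext ?_⟩
        · intro x hx; exact h1 x (List.mem_cons_of_mem _ hx)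
        · show (p :: t').head? = some (a - (a - p))
          rw [Nat.sub_sub_self hpa.le]
          rfl
        · rw [g_some_val]

theorem finite_T (hd₁ : 0 < d₁) : ∀ i, Finite (T d₁ d₂ i) := by
  intro i
  induction i using Nat.strong_induction_on with
  | _ i ih =>
    rcases Nat.eq_zero_or_pos i with rfl | hi
    · infer_instance
    · haveI : ∀ j : (Finset.Icc d₁ d₂ : Finset ℕ), Finite (T d₁ d₂ (i - j)) := by
        intro j
        rcases Nat.eq_zero_or_pos (i - (j : ℕ)) with h | h
        · rw [h]; infer_instance
        · exact ih _ (Nat.sub_lt hi (hd₁.trans_le (Finset.mem_Icc.1 j.2).1))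
      haveI : Finite ((j : (Finset.Icc d₁ d₂ : Finset ℕ)) × T d₁ d₂ (i - j)) :=
        Finite.instSigma
      haveI := Fintype.ofFinite ((j : (Finset.Icc d₁ d₂ : Finset ℕ)) × T d₁ d₂ (i - j))
      exact Finite.of_surjective _ (g_bijective i hd₁ hi).2

theorem card_T_rec (hd₁ : 0 < d₁) (i : ℕ) (hi : 0 < i) :
    Nat.card (T d₁ d₂ i) = (∑ j ∈ Finset.Icc d₁ d₂, Nat.card (T d₁ d₂ (i - j))) + 1 := by
  haveI : ∀ j : (Finset.Icc d₁ d₂ : Finset ℕ), Finite (T d₁ d₂ (i - j)) :=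
    fun _ => finite_T hd₁ _
  haveI : ∀ j : (Finset.Icc d₁ d₂ : Finset ℕ), Fintype (T d₁ d₂ (i - j)) :=
    fun _ => Fintype.ofFinite _
  rw [← Nat.card_eq_of_bijective _ (g_bijective (d₁ := d₁) (d₂ := d₂) i hd₁ hi),
    Finite.card_option]
  congr 1
  rw [Nat.card_eq_fintype_card, Fintype.card_sigma,
    ← Finset.sum_coe_sort (Finset.Icc d₁ d₂) (fun j => Nat.card (T d₁ d₂ (i - j)))]
  exact Finset.sum_congr rfl fun j _ => (Nat.card_eq_fintype_card).symm

theorem endCount_rec (d₁ d₂ : ℕ) (hd₁ : 0 < d₁) (i : ℕ) (hi : 0 < i) :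
    endCount d₁ d₂ i = (∑ j ∈ Finset.Icc d₁ d₂, endCount d₁ d₂ (i - j)) + 1 := by
  simp only [endCount_eq_card_T]
  exact card_T_rec hd₁ i hi

end EndCountAux


/-- For `i ≥ 2`, `a_i = a_{i-1} + a_{i-d₁} - a_{i-1-d₂}`
(with `a_j = 0` for `j ≤ 0`, via truncated subtraction of indices). -/
theorem endCount_simple_rec (d₁ d₂ : ℕ) (hd₁ : 0 < d₁) (hd : d₁ ≤ d₂) (i : ℕ)
    (hi : 2 ≤ i) :
    (endCount d₁ d₂ i : ℤ) =
      endCount d₁ d₂ (i - 1) + endCount d₁ d₂ (i - d₁)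
        - endCount d₁ d₂ (i - 1 - d₂) := by
  have h1 := EndCountAux.endCount_rec d₁ d₂ hd₁ i (by omega)
  have h2 := EndCountAux.endCount_rec d₁ d₂ hd₁ (i - 1) (by omega)
  have h2' : endCount d₁ d₂ (i - 1) =
      (∑ j ∈ Finset.Icc (d₁ + 1) (d₂ + 1), endCount d₁ d₂ (i - j)) + 1 := by
    rw [h2]
    congr 1
    rw [← Finset.map_add_right_Icc, Finset.sum_map]
    refine Finset.sum_congr rfl fun j _ => ?_
    have : addRightEmbedding 1 j = j + 1 := rfl
    rw [this]
    congr 1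
    omega
  have e1 : Finset.Icc d₁ d₂ = insert d₁ (Finset.Icc (d₁ + 1) d₂) := by
    rw [Finset.Icc_add_one_left_eq_Ioc, Finset.Ioc_insert_left hd]
  have e2 : Finset.Icc (d₁ + 1) (d₂ + 1) = insert (d₂ + 1) (Finset.Icc (d₁ + 1) d₂) := by
    ext x
    simp only [Finset.mem_Icc, Finset.mem_insert]
    omega
  have hn1 : d₁ ∉ Finset.Icc (d₁ + 1) d₂ := by simp
  have hn2 : d₂ + 1 ∉ Finset.Icc (d₁ + 1) d₂ := by simp
  rw [e1, Finset.sum_insert hn1] at h1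
  rw [e2, Finset.sum_insert hn2] at h2'
  have h3 : i - 1 - d₂ = i - (d₂ + 1) := by omega
  rw [h3]
  omega
end

section
/- Fix positive integers d₁ ≤ d₂ and let a_i denote the number of (d₁,d₂)-subwords of a rainbow word that terminate at position i (with a₀ = 0). Then the generating function A(z) = Σ_{n≥1} a_n z^n, regarded as a formal power series over the rationals (or integers), satisfies (z^{d₂+1} − z^{d₁} − z + 1) · A(z) = z; that is, A(z) = z / (z^{d₂+1} − z^{d₁} − z + 1). -/
namespace ECAux

abbrev T (d₁ d₂ i : ℕ) := { l : List ℕ // l ≠ [] ∧ (∀ x ∈ l, 1 ≤ x) ∧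
    l.Chain' (fun a b => a < b ∧ b - a ∈ Set.Icc d₁ d₂) ∧ l.getLast? = some i }

lemma endCount_eq (d₁ d₂ i : ℕ) : endCount d₁ d₂ i = Nat.card (T d₁ d₂ i) := rfl

lemma mem_le_getLast (l : List ℕ) (i : ℕ) (hc : l.Chain' (· < ·))
    (h : l.getLast? = some i) : ∀ x ∈ l, x ≤ i := by
  induction l with
  | nil => simp at h
  | cons a l ih =>
    cases l with
    | nil => simp_all
    | cons b t =>
      unfold List.Chain' at hc
      rw [List.isChain_cons_cons] at hc
      rw [List.getLast?_cons_cons] at h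
      intro x hx
      rcases List.mem_cons.1 hx with rfl | hx
      · exact le_of_lt (lt_of_lt_of_le hc.1 (ih hc.2 h b (by simp)))
      · exact ih hc.2 h x hx

lemma chain'_lt {d₁ d₂ : ℕ} {l : List ℕ}
    (h : l.Chain' (fun a b => a < b ∧ b - a ∈ Set.Icc d₁ d₂)) : l.Chain' (· < ·) :=
  h.imp fun _ _ hab => hab.1

instance T_finite (d₁ d₂ i : ℕ) : Finite (T d₁ d₂ i) := by
  have : ∀ l : T d₁ d₂ i, l.1.toFinset ∈ (Finset.Icc 1 i).powerset := by
    rintro ⟨l, hne, h1, hc, hlast⟩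
    simp only [Finset.mem_powerset, Finset.subset_iff, List.mem_toFinset, Finset.mem_Icc]
    exact fun x hx => ⟨h1 x hx, mem_le_getLast l i (chain'_lt hc) hlast x hx⟩
  apply Finite.of_injective (fun l : T d₁ d₂ i => (⟨l.1.toFinset, this l⟩ :
    {s // s ∈ (Finset.Icc 1 i).powerset}))
  rintro ⟨l, _, _, hc, _⟩ ⟨l', _, _, hc', _⟩ h
  simp only [Subtype.mk.injEq] at h ⊢
  have hs : l.Pairwise (· < ·) := List.isChain_iff_pairwise.1 (chain'_lt hc)
  have hs' : l'.Pairwise (· < ·) := List.isChain_iff_pairwise.1 (chain'_lt hc')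
  exact List.Perm.eq_of_pairwise (fun a b _ _ h1 h2 => absurd (h1.trans h2) (lt_irrefl _)) hs hs'
    (List.perm_of_nodup_nodup_toFinset_eq hs.nodup hs'.nodup h)

lemma T_one_le {d₁ d₂ i : ℕ} (l : T d₁ d₂ i) : 1 ≤ i := by
  obtain ⟨l, hne, h1, _, hlast⟩ := l
  have := List.getLast?_eq_getLast hne
  rw [this] at hlast
  have hi : l.getLast hne = i := by injection hlast
  exact hi ▸ h1 _ (List.getLast_mem hne)

lemma card_T_zero (d₁ d₂ : ℕ) : Nat.card (T d₁ d₂ 0) = 0 := by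
  have : IsEmpty (T d₁ d₂ 0) := ⟨fun l => absurd (T_one_le l) (by omega)⟩
  exact Nat.card_of_isEmpty

/-- The decomposition map: a valid list ending at `i` is either the singleton `[i]`
or `l ++ [i]` with `l` valid ending at `i - k` for a gap `k ∈ [d₁, d₂]`. -/
def g (d₁ d₂ i : ℕ) (hd₁ : 0 < d₁) (hi : 1 ≤ i) :
    Unit ⊕ (Σ k : (Finset.Icc d₁ d₂ : Finset ℕ), T d₁ d₂ (i - k)) → T d₁ d₂ i
  | Sum.inl _ => ⟨[i], by simp, by simpa using hi, List.isChain_singleton _, by simp⟩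
  | Sum.inr ⟨k, ⟨l, hne, h1, hc, hlast⟩⟩ => by
    have hk : d₁ ≤ (k : ℕ) ∧ (k : ℕ) ≤ d₂ := Finset.mem_Icc.1 k.2
    have h1k : 1 ≤ i - (k : ℕ) := by
      have hg : l.getLast hne = i - (k : ℕ) := by
        have h := List.getLast?_eq_getLast hne
        rw [h, Option.some_inj] at hlast
        exact hlast
      exact hg ▸ h1 _ (List.getLast_mem hne)
    refine ⟨l ++ [i], by simp, ?_, ?_, by simp [List.getLast?_concat]⟩
    · intro x hx
      rcases List.mem_append.1 hx with hx | hx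
      · exact h1 x hx
      · rw [List.mem_singleton] at hx; omega
    · unfold List.Chain'
      rw [List.isChain_append]
      refine ⟨hc, by simp, ?_⟩
      intro x hx y hy
      rw [hlast, Option.mem_some_iff] at hx
      rw [List.head?_cons, Option.mem_some_iff] at hy
      subst hx; subst hy
      exact ⟨by omega, by simp only [Set.mem_Icc]; omega⟩

lemma g_bijective (d₁ d₂ i : ℕ) (hd₁ : 0 < d₁) (hi : 1 ≤ i) :
    Function.Bijective (g d₁ d₂ i hd₁ hi) := by
  constructor
  · rintro (⟨⟩ | ⟨k, ⟨l, hne, h1, hc, hlast⟩⟩) (⟨⟩ | ⟨k', ⟨l', hne', h1', hc', hlast'⟩⟩) h <;>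
      simp only [g, Subtype.mk.injEq] at h
    · rfl
    · exact absurd (by simpa using congrArg List.length h) hne'.elim
    · exact absurd (by simpa using congrArg List.length h) hne.elim
    · have hll : l = l' := by
        have := congrArg List.dropLast h
        simpa [List.dropLast_concat] using this
      subst hll
      have hkk : (k : ℕ) = (k' : ℕ) := by
        have hg := List.getLast?_eq_getLast hne
        have e1 : l.getLast hne = i - (k : ℕ) := by
          rw [hg, Option.some_inj] at hlast; exact hlast
        have e2 : l.getLast hne = i - (k' : ℕ) := by
          rw [hg, Option.some_inj] at hlast'; exact hlast'
        have h1k := h1 _ (List.getLast_mem hne)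
        omega
      obtain ⟨k, hk⟩ := k
      obtain ⟨k', hk'⟩ := k'
      simp only at hkk
      subst hkk
      rfl
  · rintro ⟨l, hne, h1, hc, hlast⟩
    rcases l.eq_nil_or_concat with rfl | ⟨l₀, m, rfl⟩
    · exact absurd rfl hne
    · simp only [List.concat_eq_append] at hne h1 hc hlast ⊢
      have hmi : m = i := by
        rw [List.getLast?_concat, Option.some_inj] at hlast
        exact hlast
      subst hmi
      rcases eq_or_ne l₀ [] with rfl | h0
      · exact ⟨Sum.inl (), rfl⟩
      · unfold List.Chain' at hc
        rw [List.isChain_append] at hc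
        obtain ⟨hc₀, -, hR⟩ := hc
        have hj := hR (l₀.getLast h0) (by rw [List.getLast?_eq_getLast h0]; rfl) m rfl
        set j := l₀.getLast h0 with hjdef
        have hj1 : 1 ≤ j := h1 j (by simp [hjdef, List.getLast_mem h0])
        have hjlt : j < m := hj.1
        have hmem : m - j ∈ Finset.Icc d₁ d₂ := by
          simp only [Finset.mem_Icc]; exact Set.mem_Icc.1 hj.2
        refine ⟨Sum.inr ⟨⟨m - j, hmem⟩, ⟨l₀, h0, fun x hx => h1 x (by simp [hx]), hc₀, ?_⟩⟩, ?_⟩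
        · rw [List.getLast?_eq_getLast h0, Option.some_inj]
          show j = m - (m - j)
          omega
        · rfl

lemma card_T_rec (d₁ d₂ i : ℕ) (hd₁ : 0 < d₁) (hi : 1 ≤ i) :
    Nat.card (T d₁ d₂ i) = 1 + ∑ k ∈ Finset.Icc d₁ d₂, Nat.card (T d₁ d₂ (i - k)) := by
  rw [← Nat.card_congr (Equiv.ofBijective _ (g_bijective d₁ d₂ i hd₁ hi))]
  rw [Nat.card_sum]
  congr 1
  · exact Nat.card_unique
  · letI : ∀ k : (Finset.Icc d₁ d₂ : Finset ℕ), Fintype (T d₁ d₂ (i - k)) :=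
      fun k => Fintype.ofFinite _
    rw [Nat.card_eq_fintype_card, Fintype.card_sigma,
      ← Finset.sum_coe_sort (Finset.Icc d₁ d₂) (fun k => Nat.card (T d₁ d₂ (i - k)))]
    exact Finset.sum_congr rfl fun k _ => (Nat.card_eq_fintype_card).symm

lemma telescope (f : ℕ → ℤ) (d₁ d₂ : ℕ) (h : d₁ ≤ d₂) :
    ∑ k ∈ Finset.Icc d₁ d₂, (f k - f (k + 1)) = f d₁ - f (d₂ + 1) := by
  induction d₂, h using Nat.le_induction with
  | base => simp
  | succ n hn ih => rw [Finset.sum_Icc_succ_top (by omega), ih]; ring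

lemma key (d₁ d₂ : ℕ) (hd₁ : 0 < d₁) (hd : d₁ ≤ d₂) (n : ℕ) :
    (Nat.card (T d₁ d₂ n) : ℤ) + Nat.card (T d₁ d₂ (n - (d₂ + 1))) =
      (if n = 1 then 1 else 0) + Nat.card (T d₁ d₂ (n - 1)) +
        Nat.card (T d₁ d₂ (n - d₁)) := by
  rcases Nat.lt_or_ge n 2 with hn | hn
  · interval_cases n
    · simp [card_T_zero]
    · have h1 : Nat.card (T d₁ d₂ 1) = 1 := by
        rw [card_T_rec d₁ d₂ 1 hd₁ le_rfl]
        have : ∀ k ∈ Finset.Icc d₁ d₂, Nat.card (T d₁ d₂ (1 - k)) = 0 := by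
          intro k hk
          rw [Finset.mem_Icc] at hk
          have : 1 - k = 0 := by omega
          rw [this, card_T_zero]
        rw [Finset.sum_congr rfl this]
        simp
      have h2 : 1 - (d₂ + 1) = 0 := by omega
      have h3 : (1 : ℕ) - 1 = 0 := by omega
      have h4 : 1 - d₁ = 0 := by omega
      rw [h1, h2, h3, h4, card_T_zero]
      simp
  · have hrecn := card_T_rec d₁ d₂ n hd₁ (by omega)
    have hrecn1 := card_T_rec d₁ d₂ (n - 1) hd₁ (by omega)
    have hsub : ∀ k, (n - 1) - k = n - (k + 1) := fun k => by omega
    have hdiff : (Nat.card (T d₁ d₂ n) : ℤ) - Nat.card (T d₁ d₂ (n - 1)) =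
        (Nat.card (T d₁ d₂ (n - d₁)) : ℤ) - Nat.card (T d₁ d₂ (n - (d₂ + 1))) := by
      have e : ∑ k ∈ Finset.Icc d₁ d₂, (Nat.card (T d₁ d₂ (n - 1 - k)) : ℤ) =
          ∑ k ∈ Finset.Icc d₁ d₂, (Nat.card (T d₁ d₂ (n - (k + 1))) : ℤ) :=
        Finset.sum_congr rfl fun k _ => by rw [hsub k]
      rw [hrecn, hrecn1]
      push_cast
      rw [e, ← telescope (fun k => (Nat.card (T d₁ d₂ (n - k)) : ℤ)) d₁ d₂ hd,
        Finset.sum_sub_distrib]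
      ring
    have hne1 : n ≠ 1 := by omega
    rw [if_neg hne1]
    linarith

end ECAux

open PowerSeries in
/-- The generating function `A(z) = Σ_{n≥1} a_n zⁿ` of the numbers of
`(d₁,d₂)`-subwords terminating at position `n` satisfies
`(z^(d₂+1) - z^(d₁) - z + 1) · A(z) = z` as formal power series. -/
theorem endCount_generating_function (d₁ d₂ : ℕ) (hd₁ : 0 < d₁) (hd : d₁ ≤ d₂) :
    (X ^ (d₂ + 1) - X ^ d₁ - X + 1) *
      PowerSeries.mk (fun n => (endCount d₁ d₂ n : ℤ)) = X := by
  set A := PowerSeries.mk (fun n => (endCount d₁ d₂ n : ℤ)) with hA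
  have expand : (X ^ (d₂ + 1) - X ^ d₁ - X + 1) * A
      = A * X ^ (d₂ + 1) - A * X ^ d₁ - A * X ^ 1 + A := by ring
  rw [expand]
  ext n
  rw [map_add, map_sub, map_sub, PowerSeries.coeff_mul_X_pow', PowerSeries.coeff_mul_X_pow',
    PowerSeries.coeff_mul_X_pow', PowerSeries.coeff_X, hA, PowerSeries.coeff_mk,
    PowerSeries.coeff_mk, PowerSeries.coeff_mk, PowerSeries.coeff_mk]
  have hzero : (endCount d₁ d₂ 0 : ℤ) = 0 := by
    rw [ECAux.endCount_eq, ECAux.card_T_zero]; rfl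
  have hif : ∀ k : ℕ, 0 < k →
      (if k ≤ n then ((endCount d₁ d₂ (n - k)) : ℤ) else 0) = endCount d₁ d₂ (n - k) := by
    intro k hk
    split
    · rfl
    · have h0 : n - k = 0 := by omega
      rw [h0, hzero]
  rw [hif (d₂ + 1) (by omega), hif d₁ hd₁, hif 1 one_pos]
  have hkey := ECAux.key d₁ d₂ hd₁ hd n
  simp only [← ECAux.endCount_eq] at hkey
  split <;> rename_i hcase
  · rw [if_pos hcase] at hkey; linarith
  · rw [if_neg hcase] at hkey; linarith
end

section
/- Fix positive integers d₁ ≤ d₂ and let K_n = K(n, {d₁, d₁+1, …, d₂}) denote the (d₁,d₂)-complexity of a rainbow word of length n, with K₀ = 0. Then the generating function K(z) = Σ_{n≥1} K_n z^n, regarded as a formal power series, satisfies (1−z)(z^{d₂+1} − z^{d₁} − z + 1) · K(z) = z; that is, K(z) = z / ((1−z)(z^{d₂+1} − z^{d₁} − z + 1)). -/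
namespace ComplexityAux

variable (d₁ d₂ : ℕ)

/-- `aSeq n` : number of subwords ending exactly at `n`. -/
def aSeq : ℕ → ℕ
  | 0 => 0
  | n + 1 => 1 + ∑ d ∈ Finset.Icc d₁ d₂, aSeq (n - (d - 1))
decreasing_by exact Nat.lt_succ_of_le (Nat.sub_le _ _)

/-- `kSeq n` : total number of subwords. -/
def kSeq : ℕ → ℕ
  | 0 => 0
  | n + 1 => kSeq n + aSeq d₁ d₂ (n + 1)

variable {d₁ d₂}

lemma kSeq_sub_one (n : ℕ) : (kSeq d₁ d₂ n : ℤ) - kSeq d₁ d₂ (n - 1) = aSeq d₁ d₂ n := by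
  cases n with
  | zero => simp [kSeq, aSeq]
  | succ n => simp [kSeq]

lemma telescope (f : ℕ → ℤ) (a : ℕ) : ∀ n : ℕ,
    ∑ d ∈ Finset.Ico a (a + n), (f d - f (d + 1)) = f a - f (a + n)
  | 0 => by simp
  | n + 1 => by
    rw [show a + (n + 1) = (a + n) + 1 from rfl,
      Finset.sum_Ico_succ_top (Nat.le_add_right a n), telescope f a n]
    ring

lemma aSeq_diff (hd₁ : 0 < d₁) (hd : d₁ ≤ d₂) (n : ℕ) :
    (aSeq d₁ d₂ n : ℤ) - aSeq d₁ d₂ (n - 1) =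
      aSeq d₁ d₂ (n - d₁) - aSeq d₁ d₂ (n - (d₂ + 1)) + (if n = 1 then 1 else 0) := by
  match n with
  | 0 => simp [aSeq, Nat.zero_sub]
  | 1 =>
    have h1 : (1 : ℕ) - d₁ = 0 := by omega
    have h2 : (1 : ℕ) - (d₂ + 1) = 0 := by omega
    rw [h1, h2]
    have : aSeq d₁ d₂ 1 = 1 := by
      rw [aSeq]
      simp [aSeq, Nat.zero_sub]
    simp [this, aSeq]
  | (m + 2) =>
    have hL : (aSeq d₁ d₂ (m + 2) : ℤ) = 1 + ∑ d ∈ Finset.Icc d₁ d₂,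
        (aSeq d₁ d₂ (m + 1 - (d - 1)) : ℤ) := by
      rw [aSeq]; push_cast; ring
    have hL' : (aSeq d₁ d₂ (m + 1) : ℤ) = 1 + ∑ d ∈ Finset.Icc d₁ d₂,
        (aSeq d₁ d₂ (m - (d - 1)) : ℤ) := by
      rw [aSeq]; push_cast; ring
    have hsub : (m + 2 : ℕ) - 1 = m + 1 := by omega
    rw [hsub, hL, hL']
    have hif : (if m + 2 = 1 then (1 : ℤ) else 0) = 0 := by simp
    rw [hif]
    set f : ℕ → ℤ := fun d => (aSeq d₁ d₂ (m + 1 - (d - 1)) : ℤ) with hf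
    have hstep : ∀ d ∈ Finset.Icc d₁ d₂,
        f d - f (d + 1) = (aSeq d₁ d₂ (m + 1 - (d - 1)) : ℤ) - (aSeq d₁ d₂ (m - (d - 1)) : ℤ) := by
      intro d hd'
      simp only [Finset.mem_Icc] at hd'
      have : m - (d - 1) = m + 1 - ((d + 1) - 1) := by omega
      rw [this, hf]
    have htel : ∑ d ∈ Finset.Icc d₁ d₂, (f d - f (d + 1)) = f d₁ - f (d₂ + 1) := by
      have h1 : Finset.Icc d₁ d₂ = Finset.Ico d₁ (d₁ + (d₂ + 1 - d₁)) := by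
        rw [← Finset.Ico_add_one_right_eq_Icc]
        congr 1
        omega
      have h2 : d₁ + (d₂ + 1 - d₁) = d₂ + 1 := by omega
      rw [h1, telescope f d₁ (d₂ + 1 - d₁), h2]
    have hsum : ∑ d ∈ Finset.Icc d₁ d₂, (f d - f (d + 1)) =
        (∑ d ∈ Finset.Icc d₁ d₂, (aSeq d₁ d₂ (m + 1 - (d - 1)) : ℤ)) -
          ∑ d ∈ Finset.Icc d₁ d₂, (aSeq d₁ d₂ (m - (d - 1)) : ℤ) := by
      rw [Finset.sum_congr rfl hstep, Finset.sum_sub_distrib]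
    have h1 : m + 1 - (d₁ - 1) = m + 2 - d₁ := by omega
    have h2 : m + 1 - ((d₂ + 1) - 1) = m + 2 - (d₂ + 1) := by omega
    have hfd₁ : f d₁ = (aSeq d₁ d₂ (m + 2 - d₁) : ℤ) := by rw [hf]; simp only [h1]
    have hfd₂ : f (d₂ + 1) = (aSeq d₁ d₂ (m + 2 - (d₂ + 1)) : ℤ) := by rw [hf]; simp only [h2]
    rw [← hfd₁, ← hfd₂, ← htel, hsum]
    ring


lemma kSeq_identity (hd₁ : 0 < d₁) (hd : d₁ ≤ d₂) (n : ℕ) :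
    ((kSeq d₁ d₂ n : ℤ) + kSeq d₁ d₂ (n - 2) + kSeq d₁ d₂ (n - (d₁ + 1)) + kSeq d₁ d₂ (n - (d₂ + 1)))
      - (kSeq d₁ d₂ (n - 1) + kSeq d₁ d₂ (n - 1) + kSeq d₁ d₂ (n - d₁) + kSeq d₁ d₂ (n - (d₂ + 2)))
      = if n = 1 then 1 else 0 := by
  have e1 := kSeq_sub_one (d₁ := d₁) (d₂ := d₂) n
  have e2 := kSeq_sub_one (d₁ := d₁) (d₂ := d₂) (n - 1)
  have e3 := kSeq_sub_one (d₁ := d₁) (d₂ := d₂) (n - d₁)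
  have e4 := kSeq_sub_one (d₁ := d₁) (d₂ := d₂) (n - (d₂ + 1))
  have h2 : n - 1 - 1 = n - 2 := by omega
  have h3 : n - d₁ - 1 = n - (d₁ + 1) := by omega
  have h4 : n - (d₂ + 1) - 1 = n - (d₂ + 2) := by omega
  rw [h2] at e2; rw [h3] at e3; rw [h4] at e4
  have e5 := aSeq_diff hd₁ hd n
  linarith

open PowerSeries in
lemma ps_identity (hd₁ : 0 < d₁) (hd : d₁ ≤ d₂) :
    (1 - X) * (X ^ (d₂ + 1) - X ^ d₁ - X + 1) *
      PowerSeries.mk (fun n => (kSeq d₁ d₂ n : ℤ)) = X := by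
  set F := PowerSeries.mk (fun n => (kSeq d₁ d₂ n : ℤ)) with hF
  have expand : (1 - X) * (X ^ (d₂ + 1) - X ^ d₁ - X + 1) * F =
      (F * X ^ 0 + F * X ^ 2 + F * X ^ (d₁ + 1) + F * X ^ (d₂ + 1)) -
        (F * X ^ 1 + F * X ^ 1 + F * X ^ d₁ + F * X ^ (d₂ + 2)) := by ring
  rw [expand]
  ext n
  have hco : ∀ j : ℕ, (PowerSeries.coeff n) (F * X ^ j) = (kSeq d₁ d₂ (n - j) : ℤ) := by
    intro j
    rw [PowerSeries.coeff_mul_X_pow']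
    split
    · simp [hF, PowerSeries.coeff_mk]
    · have h0 : n - j = 0 := by omega
      rw [h0]
      simp [kSeq]
  simp only [map_sub, map_add, hco, PowerSeries.coeff_X, Nat.sub_zero]
  exact kSeq_identity hd₁ hd n


/-! ### Combinatorial part -/

variable (d₁ d₂) in
/-- All `M`-subwords for `M = Icc d₁ d₂`. -/
def SubSet (n : ℕ) : Set (List ℕ) := {l | IsMSubword n (Set.Icc d₁ d₂) l}

variable (d₁ d₂) in
/-- The `M`-subwords whose last element is `n`. -/
def ESet (n : ℕ) : Set (List ℕ) :=
  {l | IsMSubword n (Set.Icc d₁ d₂) l ∧ l.getLast? = some n}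

lemma chain'_lt {l : List ℕ} (h : l.Chain' (fun a b => a < b ∧ b - a ∈ Set.Icc d₁ d₂)) :
    l.Chain' (· < ·) := h.imp (fun {a b : ℕ} hab => hab.1)

lemma getLast?_mem {l : List ℕ} {m : ℕ} (h : l.getLast? = some m) : m ∈ l := by
  have hne : l ≠ [] := by rintro rfl; simp at h
  rw [List.getLast?_eq_getLast_of_ne_nil hne] at h
  exact (Option.some_inj.mp h) ▸ List.getLast_mem hne

lemma mem_le_getLast {l : List ℕ} {m : ℕ} (h : l.Chain' (· < ·))
    (hm : l.getLast? = some m) : ∀ x ∈ l, x ≤ m := by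
  replace h := List.isChain_iff_pairwise.mp h
  intro x hx
  have hne : l ≠ [] := by rintro rfl; simp at hm
  have h1 : l.getLast hne = m := by
    rw [List.getLast?_eq_getLast_of_ne_nil hne] at hm
    exact Option.some_inj.mp hm
  have h2 : l.dropLast ++ [m] = l := by rw [← h1]; exact List.dropLast_append_getLast hne
  rw [← h2] at h hx
  rcases List.mem_append.mp hx with h3 | h3
  · have := (List.pairwise_append.mp h).2.2 x h3 m (by simp)
    omega
  · simp only [List.mem_singleton] at h3; omega

lemma subSet_finite (n : ℕ) : (SubSet d₁ d₂ n).Finite := by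
  apply Set.Finite.of_finite_image (f := List.toFinset)
  · apply Set.Finite.subset ((Finset.Icc 1 n).powerset.finite_toSet)
    rintro s ⟨l, ⟨_, hbd, _⟩, rfl⟩
    rw [Finset.mem_coe, Finset.mem_powerset]
    intro x hx
    rw [List.mem_toFinset] at hx
    exact Finset.mem_Icc.mpr ⟨(hbd x hx).1, (hbd x hx).2⟩
  · intro l₁ h₁ l₂ h₂ he
    have s₁ : l₁.Pairwise (· < ·) := List.isChain_iff_pairwise.mp (chain'_lt h₁.2.2)
    have s₂ : l₂.Pairwise (· < ·) := List.isChain_iff_pairwise.mp (chain'_lt h₂.2.2)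
    have n₁ : l₁.Nodup := s₁.imp ne_of_lt
    have n₂ : l₂.Nodup := s₂.imp ne_of_lt
    exact List.Perm.eq_of_pairwise (fun a b _ _ h1 h2 => by omega) s₁ s₂ (List.perm_of_nodup_nodup_toFinset_eq n₁ n₂ he)

lemma eSet_subset (n : ℕ) : ESet d₁ d₂ n ⊆ SubSet d₁ d₂ n := fun _ h => h.1

lemma eSet_finite (n : ℕ) : (ESet d₁ d₂ n).Finite :=
  (subSet_finite n).subset (eSet_subset n)

lemma subSet_zero : SubSet d₁ d₂ 0 = ∅ := by
  ext l
  simp only [SubSet, Set.mem_setOf_eq, Set.mem_empty_iff_false, iff_false]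
  rintro ⟨hne, hbd, -⟩
  rcases List.exists_mem_of_ne_nil l hne with ⟨x, hx⟩
  have := hbd x hx
  omega

lemma eSet_zero : ESet d₁ d₂ 0 = ∅ := by
  rw [← Set.subset_empty_iff, ← subSet_zero (d₁ := d₁) (d₂ := d₂)]
  exact eSet_subset 0

lemma subSet_succ (n : ℕ) :
    SubSet d₁ d₂ (n + 1) = SubSet d₁ d₂ n ∪ ESet d₁ d₂ (n + 1) := by
  ext l
  constructor
  · rintro ⟨hne, hbd, hch⟩
    obtain ⟨m, hm⟩ : ∃ m, l.getLast? = some m :=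
      ⟨l.getLast hne, List.getLast?_eq_getLast_of_ne_nil hne⟩
    have hm1 := hbd m (getLast?_mem hm)
    by_cases hc : m = n + 1
    · exact Or.inr ⟨⟨hne, hbd, hch⟩, hc ▸ hm⟩
    · refine Or.inl ⟨hne, fun x hx => ⟨(hbd x hx).1, ?_⟩, hch⟩
      have := mem_le_getLast (chain'_lt hch) hm x hx
      omega
  · rintro (⟨hne, hbd, hch⟩ | ⟨h, -⟩)
    · exact ⟨hne, fun x hx => ⟨(hbd x hx).1, le_trans (hbd x hx).2 (Nat.le_succ n)⟩, hch⟩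
    · exact h

lemma subSet_disj (n : ℕ) : Disjoint (SubSet d₁ d₂ n) (ESet d₁ d₂ (n + 1)) := by
  rw [Set.disjoint_left]
  rintro l ⟨-, hbd, -⟩ ⟨-, hlast⟩
  have := hbd (n + 1) (getLast?_mem hlast)
  omega

lemma eSet_decomp (hd₁ : 0 < d₁) (n : ℕ) :
    ESet d₁ d₂ (n + 1) = insert [n + 1]
      (⋃ d ∈ Finset.Icc d₁ d₂, (fun l => l ++ [n + 1]) '' ESet d₁ d₂ (n + 1 - d)) := by
  ext l
  simp only [Set.mem_insert_iff, Set.mem_iUnion, Set.mem_image, exists_prop]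
  constructor
  · rintro ⟨⟨hne, hbd, hch⟩, hlast⟩
    have hgl : l.getLast hne = n + 1 := by
      rw [List.getLast?_eq_getLast_of_ne_nil hne] at hlast
      exact Option.some_inj.mp hlast
    have hdec : l.dropLast ++ [n + 1] = l := by
      rw [← hgl]; exact List.dropLast_append_getLast hne
    by_cases hl : l.dropLast = []
    · left; rw [← hdec, hl, List.nil_append]
    · right
      obtain ⟨m, hm'⟩ : ∃ m, l.dropLast.getLast? = some m :=
        ⟨l.dropLast.getLast hl, List.getLast?_eq_getLast_of_ne_nil hl⟩
      rw [← hdec] at hch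
      replace hch := List.isChain_append.mp hch
      obtain ⟨hch1, -, hch3⟩ := hch
      have hrel := hch3 m hm' (n + 1) (by simp)
      have hmlt : m < n + 1 := hrel.1
      refine ⟨n + 1 - m, by simpa using hrel.2, l.dropLast, ⟨⟨?_, ?_, hch1⟩, ?_⟩, hdec⟩
      · exact hl
      · intro x hx
        have hx' : x ∈ l := by rw [← hdec]; exact List.mem_append_left _ hx
        have hle := mem_le_getLast (chain'_lt hch1) hm' x hx
        have : n + 1 - (n + 1 - m) = m := by omega
        exact ⟨(hbd x hx').1, by omega⟩
      · have : n + 1 - (n + 1 - m) = m := by omega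
        rw [this]; exact hm'
  · rintro (rfl | ⟨d, hd', l', ⟨⟨hne', hbd', hch'⟩, hlast'⟩, rfl⟩)
    · exact ⟨⟨by simp, by simp, List.isChain_singleton _⟩, by simp⟩
    · simp only [Finset.mem_Icc] at hd'
      obtain ⟨x₀, hx₀⟩ := List.exists_mem_of_ne_nil l' hne'
      have hx₀' := hbd' x₀ hx₀
      have hdn : d ≤ n := by omega
      have hml : ∀ x ∈ l', x ≤ n + 1 - d := fun x hx => (hbd' x hx).2
      have hmlast := hbd' (n + 1 - d) (getLast?_mem hlast')
      constructor
      · refine ⟨by simp, ?_, ?_⟩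
        · intro x hx
          rcases List.mem_append.mp hx with hx | hx
          · exact ⟨(hbd' x hx).1, by have := (hbd' x hx).2; omega⟩
          · simp only [List.mem_singleton] at hx; omega
        · refine List.isChain_append.mpr ?_
          refine ⟨hch', List.isChain_singleton _, ?_⟩
          intro x hx y hy
          simp only [List.head?_cons, Option.mem_def, Option.some_inj] at hy
          rw [hlast'] at hx
          simp only [Option.mem_def, Option.some_inj] at hx
          subst hx; subst hy
          constructor
          · omega
          · simp only [Set.mem_Icc]
            constructor <;> omega
      · exact List.getLast?_concat


lemma ncard_biUnion {ι α : Type*} (s : Finset ι) (f : ι → Set α)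
    (hfin : ∀ i ∈ s, (f i).Finite)
    (hdisj : ∀ i ∈ s, ∀ j ∈ s, i ≠ j → Disjoint (f i) (f j)) :
    (⋃ i ∈ s, f i).ncard = ∑ i ∈ s, (f i).ncard := by
  classical
  induction s using Finset.induction_on with
  | empty => simp
  | @insert a s ha ih =>
    rw [Finset.set_biUnion_insert, Finset.sum_insert ha]
    have hfinU : (⋃ i ∈ s, f i).Finite := by
      rw [← Finset.set_biUnion_coe]
      exact Set.Finite.biUnion s.finite_toSet
        (fun i hi => hfin i (Finset.mem_insert_of_mem hi))
    have hdisj' : Disjoint (f a) (⋃ i ∈ s, f i) := by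
      rw [Set.disjoint_iUnion₂_right]
      intro i hi
      exact hdisj a (Finset.mem_insert_self a s) i (Finset.mem_insert_of_mem hi)
        (fun h => ha (h ▸ hi))
    rw [Set.ncard_union_eq hdisj' (hfin a (Finset.mem_insert_self a s)) hfinU,
      ih (fun i hi => hfin i (Finset.mem_insert_of_mem hi))
        (fun i hi j hj hij => hdisj i (Finset.mem_insert_of_mem hi) j
          (Finset.mem_insert_of_mem hj) hij)]

lemma eSet_disjoint {m m' : ℕ} (h : m ≠ m') :
    Disjoint (ESet d₁ d₂ m) (ESet d₁ d₂ m') := by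
  rw [Set.disjoint_left]
  rintro l ⟨-, h1⟩ ⟨-, h2⟩
  rw [h1] at h2
  exact h (Option.some_inj.mp h2)

lemma eSet_card (hd₁ : 0 < d₁) (n : ℕ) :
    (ESet d₁ d₂ (n + 1)).ncard = 1 + ∑ d ∈ Finset.Icc d₁ d₂, (ESet d₁ d₂ (n + 1 - d)).ncard := by
  classical
  rw [eSet_decomp hd₁ n]
  have hinj : Function.Injective (fun l : List ℕ => l ++ [n + 1]) :=
    fun a b hab => List.append_cancel_right hab
  have hfin : ∀ d ∈ Finset.Icc d₁ d₂,
      ((fun l => l ++ [n + 1]) '' ESet d₁ d₂ (n + 1 - d)).Finite :=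
    fun d _ => (eSet_finite _).image _
  have hdisj : ∀ d ∈ Finset.Icc d₁ d₂, ∀ d' ∈ Finset.Icc d₁ d₂, d ≠ d' →
      Disjoint ((fun l => l ++ [n + 1]) '' ESet d₁ d₂ (n + 1 - d))
        ((fun l => l ++ [n + 1]) '' ESet d₁ d₂ (n + 1 - d')) := by
    intro d hd' d' hd'' hne
    by_cases hc : n + 1 - d = n + 1 - d'
    · have h0 : n + 1 - d = 0 := by omega
      have h0' : n + 1 - d' = 0 := by omega
      rw [h0, h0', eSet_zero]
      simp
    · apply Set.disjoint_left.mpr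
      rintro x ⟨a, ha, rfl⟩ ⟨b, hb, hab⟩
      have hba : b = a := List.append_cancel_right hab
      subst hba
      have h1 := ha.2
      have h2 := hb.2
      rw [h1] at h2
      exact hc (Option.some_inj.mp h2)
  have hfinU : (⋃ d ∈ Finset.Icc d₁ d₂,
      (fun l => l ++ [n + 1]) '' ESet d₁ d₂ (n + 1 - d)).Finite := by
    rw [← Finset.set_biUnion_coe]
    exact Set.Finite.biUnion (Finset.Icc d₁ d₂).finite_toSet hfin
  have hnot : [n + 1] ∉ ⋃ d ∈ Finset.Icc d₁ d₂,
      (fun l => l ++ [n + 1]) '' ESet d₁ d₂ (n + 1 - d) := by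
    simp only [Set.mem_iUnion, Set.mem_image, not_exists]
    rintro d hd' l' ⟨hl', habs⟩
    have h0 : l' = [] := by
      have hlen := congrArg List.length habs
      simp at hlen
      exact hlen
    exact hl'.1.1 h0
  rw [Set.ncard_insert_of_notMem hnot hfinU, ncard_biUnion _ _ hfin hdisj]
  have himg : ∀ d ∈ Finset.Icc d₁ d₂,
      ((fun l => l ++ [n + 1]) '' ESet d₁ d₂ (n + 1 - d)).ncard =
        (ESet d₁ d₂ (n + 1 - d)).ncard :=
    fun d _ => Set.ncard_image_of_injective _ hinj
  rw [Finset.sum_congr rfl himg]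
  omega

lemma subSet_card (n : ℕ) :
    (SubSet d₁ d₂ (n + 1)).ncard = (SubSet d₁ d₂ n).ncard + (ESet d₁ d₂ (n + 1)).ncard := by
  rw [subSet_succ, Set.ncard_union_eq (subSet_disj n) (subSet_finite n) (eSet_finite _)]

lemma eSet_ncard (hd₁ : 0 < d₁) : ∀ n, (ESet d₁ d₂ n).ncard = aSeq d₁ d₂ n := by
  intro n
  induction n using Nat.strong_induction_on with
  | _ n ih =>
    match n with
    | 0 => rw [eSet_zero]; simp [aSeq]
    | m + 1 =>
      rw [eSet_card hd₁ m, aSeq]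
      congr 1
      refine Finset.sum_congr rfl (fun d hd' => ?_)
      simp only [Finset.mem_Icc] at hd'
      have h1 : m + 1 - d = m - (d - 1) := by omega
      rw [h1]
      exact ih _ (by omega)

lemma subSet_ncard (hd₁ : 0 < d₁) : ∀ n, (SubSet d₁ d₂ n).ncard = kSeq d₁ d₂ n := by
  intro n
  induction n with
  | zero => rw [subSet_zero]; simp [kSeq]
  | succ n ih => rw [subSet_card, ih, eSet_ncard hd₁, kSeq]

lemma mcomp_eq (hd₁ : 0 < d₁) (n : ℕ) :
    MComplexity n (Set.Icc d₁ d₂) = kSeq d₁ d₂ n := by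
  rw [MComplexity, ← subSet_ncard hd₁ n, ← Nat.card_coe_set_eq]
  exact Nat.card_congr (Equiv.subtypeEquivRight fun l => Iff.rfl)

end ComplexityAux

open PowerSeries in
/-- The generating function `K(z) = Σ_{n≥1} K_n zⁿ` of the `(d₁,d₂)`-complexities
`K_n = K(n, {d₁,…,d₂})` (with `K₀ = 0`) satisfies
`(1 - z)(z^(d₂+1) - z^(d₁) - z + 1) · K(z) = z` as formal power series. -/
theorem complexity_generating_function (d₁ d₂ : ℕ) (hd₁ : 0 < d₁) (hd : d₁ ≤ d₂) :
    (1 - X) * (X ^ (d₂ + 1) - X ^ d₁ - X + 1) *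
      PowerSeries.mk (fun n => (MComplexity n (Set.Icc d₁ d₂) : ℤ)) = X := by
  have h : PowerSeries.mk (fun n => (MComplexity n (Set.Icc d₁ d₂) : ℤ)) =
      PowerSeries.mk (fun n => (ComplexityAux.kSeq d₁ d₂ n : ℤ)) := by
    ext n
    simp only [PowerSeries.coeff_mk]
    rw [ComplexityAux.mcomp_eq hd₁ n]
  rw [h]
  exact ComplexityAux.ps_identity hd₁ hd
end
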